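/- arXiv:2105.02190 — 8 statements merged into one kernel-verified Lean document; each statement's English description precedes it below -/
import Mathlib

section
/- Suppose α, β, γ are nonzero rational numbers such that none of α, β, γ is the square of a rational number and the product α·β·γ is also not the square of a rational number. Then there exists a prime p, dividing none of the numerators and denominators of α, β, γ, such that none of α, β, γ is a square modulo p. -/
/-!
Replace each rational `x` by the integer `x.num * x.den`, which lies in the same square class.
For `M = 4 * |ABC|` the Jacobi symbols give a homomorphism `u ↦ (J(A | u), J(B | u), J(C | u))`
from `(ZMod M)ˣ` to `{±1}³ ≅ 𝔽₂³`. If its image missed `(-1, -1, -1)`, some linear functional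
on `𝔽₂³` would vanish on the image but not on the all-ones vector; such a functional sums an
odd set `T` of coordinates, so `J(∏ T | ·)` would be trivial. But a non-square integer has Jacobi
symbol `-1` at some odd modulus: take an odd prime `q` in its squarefree part and a modulus that
is a non-residue mod `q` and `1` modulo the rest (quadratic reciprocity), or handle the squarefree
parts `-1, 2, -2` by hand. Dirichlet's theorem turns the resulting unit into a prime.
-/

open scoped NumberTheorySymbols
open Finset

theorem ZMod.eq_zero_or_eq_one (c : ZMod 2) : c = 0 ∨ c = 1 := by
  revert c; decide

theorem Submodule.exists_odd_card_forall_sum_eq_zero {ι : Type*} [Fintype ι]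
    {H : Submodule (ZMod 2) (ι → ZMod 2)} (h : 1 ∉ H) :
    ∃ T : Finset ι, Odd #T ∧ ∀ v ∈ H, ∑ i ∈ T, v i = 0 := by
  classical
  obtain ⟨φ, hφ1, hφH⟩ := H.exists_dual_map_eq_bot_of_notMem h inferInstance
  set T := univ.filter fun i => φ (fun j => if i = j then 1 else 0) = 1
  have hφ : ∀ v, φ v = ∑ i ∈ T, v i := by
    intro v
    rw [φ.pi_apply_eq_sum_univ v, sum_filter]
    refine sum_congr rfl fun i _ => ?_
    rcases ZMod.eq_zero_or_eq_one (φ fun j => if i = j then 1 else 0) with hc | hc <;> simp [hc]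
  refine ⟨T, ?_, fun v hv => (hφ v).symm.trans ?_⟩
  · rw [hφ] at hφ1
    simp only [Pi.one_apply, sum_const, nsmul_one, ne_eq, ZMod.natCast_eq_zero_iff_even] at hφ1
    exact Nat.not_even_iff_odd.mp hφ1
  · exact (Submodule.mem_bot _).mp (hφH ▸ Submodule.mem_map_of_mem hv)

theorem Finset.prod_neg_one_uzpow {ι : Type*} (T : Finset ι) (z : ι → ZMod 2) :
    ∏ i ∈ T, (-1 : ℤˣ) ^ z i = (-1) ^ ∑ i ∈ T, z i := by
  classical
  induction T using Finset.induction_on with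
  | empty => simp
  | insert i T hi ih => rw [prod_insert hi, sum_insert hi, ih, uzpow_add]

theorem exists_forall_eq_neg_one_of_odd_card {G ι : Type*} [CommMonoid G] [Fintype ι]
    (χ : ι → G →* ℤˣ) (h : ∀ T : Finset ι, Odd #T → ∃ g, ∏ i ∈ T, χ i g = -1) :
    ∃ g, ∀ i, χ i g = -1 := by
  -- the image of `g ↦ (χ i g)ᵢ`, transported along `ZMod 2 ≃ ℤˣ, z ↦ (-1) ^ z`
  let H : Submodule (ZMod 2) (ι → ZMod 2) :=
    { carrier := {v | ∃ g, ∀ i, χ i g = (-1) ^ v i}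
      add_mem' := by
        rintro v w ⟨g, hg⟩ ⟨g', hg'⟩
        exact ⟨g * g', fun i => by simp [hg, hg', uzpow_add]⟩
      zero_mem' := ⟨1, fun i => by simp⟩
      smul_mem' := by
        rintro c v ⟨g, hg⟩
        rcases ZMod.eq_zero_or_eq_one c with rfl | rfl
        · exact ⟨1, fun i => by simp⟩
        · simpa using ⟨g, hg⟩ }
  by_contra hne
  have h1 : (1 : ι → ZMod 2) ∉ H := fun ⟨g, hg⟩ => hne ⟨g, fun i => by simpa using hg i⟩
  obtain ⟨T, hT, hTH⟩ := Submodule.exists_odd_card_forall_sum_eq_zero h1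
  obtain ⟨g, hg⟩ := h T hT
  have hsign : ∀ u : ℤˣ, ∃ z : ZMod 2, u = (-1) ^ z := fun u => by
    rcases Int.units_eq_one_or u with rfl | rfl
    exacts [⟨0, by simp⟩, ⟨1, by simp⟩]
  choose z hz using hsign
  have hsum := hTH (fun i => z (χ i g)) ⟨g, fun i => hz _⟩
  rw [prod_congr rfl fun i _ => hz (χ i g), prod_neg_one_uzpow, hsum, uzpow_zero] at hg
  exact absurd hg (by decide)

theorem jacobiSym.finset_prod_left {ι : Type*} (T : Finset ι) (a : ι → ℤ) (b : ℕ) :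
    J(∏ i ∈ T, a i | b) = ∏ i ∈ T, J(a i | b) :=
  map_prod (⟨⟨(J(· | b)), one_left b⟩, fun x y => mul_left x y b⟩ : ℤ →* ℤ) a T

theorem jacobiSym.mod_right_of_dvd {a : ℤ} {b M : ℕ} (hb : Odd b) (h : 4 * a.natAbs ∣ M) :
    J(a | b % M) = J(a | b) := by
  have hodd : Odd (b % M) := by
    rw [Nat.odd_iff, Nat.mod_mod_of_dvd b (dvd_trans ⟨2 * a.natAbs, by ring⟩ h)]
    exact Nat.odd_iff.mp hb
  rw [mod_right a hodd, mod_right a hb, Nat.mod_mod_of_dvd b h]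

theorem ZMod.odd_val_of_unit {M : ℕ} (hM : 2 ∣ M) (u : (ZMod M)ˣ) : Odd (u : ZMod M).val :=
  Nat.coprime_two_right.mp ((ZMod.val_coe_unit_coprime u).coprime_dvd_right hM)

/-- `J(a | ·)` as a character of `(ZMod M)ˣ`; it is well defined because `J(a | b)` only depends
on `b` modulo `4 * |a|` for odd `b`. -/
def jacobiChar {a : ℤ} {M : ℕ} (h : 4 * a.natAbs ∣ M) : (ZMod M)ˣ →* ℤˣ :=
  MonoidHom.toHomUnits
    { toFun := fun u => J(a | (u : ZMod M).val)
      map_one' := by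
        simp only [Units.val_one, ZMod.val_one_eq_one_mod, jacobiSym.mod_right_of_dvd odd_one h,
          jacobiSym.one_right]
      map_mul' := fun u v => by
        have h2 : 2 ∣ M := dvd_trans ⟨2 * a.natAbs, by ring⟩ h
        have hu := ZMod.odd_val_of_unit h2 u
        have hv := ZMod.odd_val_of_unit h2 v
        simp only [Units.val_mul, ZMod.val_mul, jacobiSym.mod_right_of_dvd (hu.mul hv) h]
        exact jacobiSym.mul_right' a hu.pos.ne' hv.pos.ne' }

theorem jacobiChar_apply {a : ℤ} {M : ℕ} (h : 4 * a.natAbs ∣ M) (u : (ZMod M)ˣ) :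
    (jacobiChar h u : ℤ) = J(a | (u : ZMod M).val) := rfl

theorem jacobiChar_unitOfCoprime {a : ℤ} {M b : ℕ} (h : 4 * a.natAbs ∣ M) (hb : Odd b)
    (hbM : b.Coprime M) : (jacobiChar h (ZMod.unitOfCoprime b hbM) : ℤ) = J(a | b) := by
  rw [jacobiChar_apply, ZMod.coe_unitOfCoprime, ZMod.val_natCast,
    jacobiSym.mod_right_of_dvd hb h]

theorem exists_prime_gt_jacobiSym_eq_jacobiChar {M : ℕ} [NeZero M] (u : (ZMod M)ˣ) (n : ℕ) :
    ∃ p > n, p.Prime ∧ ∀ (a : ℤ) (h : 4 * a.natAbs ∣ M), J(a | p) = jacobiChar h u := by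
  obtain ⟨p, hpn, hp, hpu⟩ := Nat.forall_exists_prime_gt_and_eq_mod u.isUnit n
  refine ⟨p, hpn, hp, fun a h => ?_⟩
  have h2 : 2 ∣ M := dvd_trans ⟨2 * a.natAbs, by ring⟩ h
  have hodd : Odd p := by
    have := ZMod.odd_val_of_unit h2 u
    rw [← hpu, ZMod.val_natCast, Nat.odd_iff, Nat.mod_mod_of_dvd p h2] at this
    exact Nat.odd_iff.mpr this
  rw [jacobiChar_apply, ← hpu, ZMod.val_natCast, jacobiSym.mod_right_of_dvd hodd h]

theorem jacobiSym.exists_odd_mul_eq_neg_one {q : ℕ} (hq : q.Prime) (hq2 : q ≠ 2) {s : ℤ}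
    (hqs : ¬ (q : ℤ) ∣ s) : ∃ b : ℕ, Odd b ∧ J(q * s | b) = -1 := by
  have := Fact.mk hq
  have hqodd : Odd q := hq.odd_of_ne_two hq2
  obtain ⟨c, hc⟩ := FiniteField.exists_nonsquare (F := ZMod q) (by rwa [ZMod.ringChar_zmod_n])
  have hcq : J(c.val | q) = -1 := by
    rw [ZMod.nonsquare_iff_jacobiSym_eq_neg_one, Int.cast_natCast, ZMod.natCast_zmod_val]
    exact hc
  have hs0 : s ≠ 0 := by rintro rfl; exact hqs (dvd_zero _)
  have hcop : Nat.Coprime (4 * s.natAbs) q :=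
    Nat.Coprime.mul_left (hqodd.coprime_two_right.pow_right 2).symm
      ((hq.coprime_iff_not_dvd.mpr (by rwa [← Int.natCast_dvd])).symm)
  -- `b ≡ 1 [MOD 4|s|]` makes `J(s | b) = 1`; `b ≡ c [MOD q]` makes `J(q | b) = J(c | q)`
  obtain ⟨b, hb4s, hbq⟩ := Nat.chineseRemainder hcop 1 c.val
  have hb4 : b % 4 = 1 := Nat.ModEq.of_dvd (dvd_mul_right 4 _) hb4s
  have hbodd : Odd b := Nat.odd_iff.mpr (by omega)
  have hJs : J(s | b) = 1 := by
    rw [jacobiSym.mod_right s hbodd, hb4s, Nat.one_mod_eq_one.mpr (by omega), one_right]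
  have hJq : J(q | b) = -1 := by
    rw [jacobiSym.quadratic_reciprocity_one_mod_four' hqodd hb4, ← hcq]
    exact jacobiSym.mod_left' (by exact_mod_cast hbq)
  exact ⟨b, hbodd, by rw [mul_left, hJq, hJs, mul_one]⟩

theorem Squarefree.natAbs_dvd_two_of_forall_prime_dvd {s : ℤ} (hs : Squarefree s)
    (h : ∀ q : ℕ, q.Prime → q ∣ s.natAbs → q = 2) : s.natAbs ∣ 2 := by
  rw [← Nat.prod_primeFactors_of_squarefree (Int.squarefree_natAbs.mpr hs)]
  calc ∏ q ∈ s.natAbs.primeFactors, q ∣ ∏ q ∈ {2}, q :=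
        prod_dvd_prod_of_subset _ _ _ fun q hq =>
          mem_singleton.mpr
            (h q (Nat.prime_of_mem_primeFactors hq) (Nat.dvd_of_mem_primeFactors hq))
    _ = 2 := prod_singleton _ _

theorem jacobiSym.exists_odd_eq_neg_one_of_squarefree {s : ℤ} (hs : Squarefree s) (hs1 : s ≠ 1) :
    ∃ b : ℕ, Odd b ∧ J(s | b) = -1 := by
  by_cases hodd : ∃ q : ℕ, q.Prime ∧ q ∣ s.natAbs ∧ q ≠ 2
  · obtain ⟨q, hq, hqs, hq2⟩ := hodd
    obtain ⟨s', rfl⟩ := Int.natCast_dvd.mpr hqs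
    refine exists_odd_mul_eq_neg_one hq hq2 fun hqs' => ?_
    exact hq.not_isUnit (Int.ofNat_isUnit.mp (hs _ (mul_dvd_mul_left _ hqs')))
  · push Not at hodd
    have h2 := hs.natAbs_dvd_two_of_forall_prime_dvd fun q hq hqs => hodd q hq hqs
    rcases (Nat.dvd_prime Nat.prime_two).mp h2 with h | h <;>
      rcases Int.natAbs_eq_iff.mp h with rfl | rfl
    · exact absurd rfl hs1
    · exact ⟨3, by decide, by norm_num⟩
    · exact ⟨3, by decide, by norm_num⟩
    · exact ⟨5, by decide, by norm_num⟩

theorem jacobiSym.exists_prime_gt_eq_neg_one {a : ℤ} (ha : ¬ IsSquare a) (n : ℕ) :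
    ∃ p > n, p.Prime ∧ J(a | p) = -1 := by
  have ha0 : a ≠ 0 := by rintro rfl; exact ha IsSquare.zero
  obtain ⟨s₀, t, hts, hs₀⟩ := Nat.sq_mul_squarefree a.natAbs
  have ht0 : t ≠ 0 := by
    rintro rfl
    exact ha0 (Int.natAbs_eq_zero.mp (by rw [← hts]; ring))
  set s : ℤ := a.sign * s₀
  have hats : a = t ^ 2 * s := by
    rw [← Int.sign_mul_natAbs a, ← hts]
    push_cast
    ring
  have hs1 : s ≠ 1 := by
    rintro hs
    exact ha ⟨t, by rw [hats, hs]; ring⟩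
  have hs : Squarefree s := by
    rwa [← Int.squarefree_natAbs, Int.natAbs_mul, Int.natAbs_sign_of_ne_zero ha0, one_mul,
      Int.natAbs_natCast]
  obtain ⟨b, hbodd, hbs⟩ := exists_odd_eq_neg_one_of_squarefree hs hs1
  have hsb : s.gcd b = 1 := by
    by_contra h
    have := jacobiSym.eq_zero_iff.mpr ⟨hbodd.pos.ne', h⟩
    rw [hbs] at this
    exact absurd this (by decide)
  have hbcop : b.Coprime (4 * s.natAbs) :=
    Nat.Coprime.mul_right (Nat.coprime_two_right.mpr hbodd |>.pow_right 2) (Nat.Coprime.symm hsb)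
  have : NeZero (4 * s.natAbs) := ⟨mul_ne_zero four_ne_zero (Int.natAbs_ne_zero.mpr hs.ne_zero)⟩
  obtain ⟨p, hpn, hp, hps⟩ :=
    exists_prime_gt_jacobiSym_eq_jacobiChar (ZMod.unitOfCoprime b hbcop) (max n t)
  refine ⟨p, (le_max_left n t).trans_lt hpn, hp, ?_⟩
  have hpt : Int.gcd t p = 1 := Nat.Coprime.symm <| hp.coprime_iff_not_dvd.mpr fun h =>
    absurd (Nat.le_of_dvd (Nat.pos_of_ne_zero ht0) h) (by omega)
  rw [hats, mul_left, sq_one' hpt, one_mul, hps s dvd_rfl, jacobiChar_unitOfCoprime _ hbodd, hbs]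

theorem exists_prime_forall_jacobiSym_eq_neg_one {ι : Type*} [Fintype ι] (a : ι → ℤ)
    (h : ∀ T : Finset ι, Odd #T → ¬ IsSquare (∏ i ∈ T, a i)) :
    ∃ p : ℕ, p.Prime ∧ ∀ i, J(a i | p) = -1 := by
  have ha0 : ∀ i, a i ≠ 0 := fun i hi => h {i} (by simp) (by simp [hi])
  set M := 4 * ∏ i, (a i).natAbs
  have hM : ∀ T : Finset ι, 4 * (∏ i ∈ T, a i).natAbs ∣ M := fun T => by
    rw [← Int.natAbsHom_apply, map_prod]
    exact mul_dvd_mul_left 4 (prod_dvd_prod_of_subset _ _ _ (subset_univ T))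
  have hMi : ∀ i, 4 * (a i).natAbs ∣ M := fun i => by simpa using hM {i}
  have hM0 : 0 < M := by simp [M, Int.natAbs_pos, ha0]
  have : NeZero M := ⟨hM0.ne'⟩
  have hT : ∀ T : Finset ι, Odd #T → ∃ u, ∏ i ∈ T, jacobiChar (hMi i) u = -1 := by
    intro T hT
    obtain ⟨p, hpM, hp, hpT⟩ := jacobiSym.exists_prime_gt_eq_neg_one (h T hT) M
    have hpM' : p.Coprime M :=
      hp.coprime_iff_not_dvd.mpr fun hd => absurd (Nat.le_of_dvd hM0 hd) (by omega)
    have hpodd : Odd p := hp.odd_of_ne_two (by omega)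
    refine ⟨ZMod.unitOfCoprime p hpM', Units.ext ?_⟩
    rw [Units.coe_prod]
    simp only [jacobiChar_unitOfCoprime _ hpodd]
    rw [← jacobiSym.finset_prod_left, hpT, Units.val_neg, Units.val_one]
  obtain ⟨u, hu⟩ := exists_forall_eq_neg_one_of_odd_card _ hT
  obtain ⟨p, -, hp, hpu⟩ := exists_prime_gt_jacobiSym_eq_jacobiChar u 0
  exact ⟨p, hp, fun i => by rw [hpu _ (hMi i), hu i, Units.val_neg, Units.val_one]⟩

theorem Rat.isSquare_prod_of_isSquare_prod_num_mul_den {ι : Type*} (T : Finset ι) (x : ι → ℚ)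
    (h : IsSquare (∏ i ∈ T, (x i).num * (x i).den)) : IsSquare (∏ i ∈ T, x i) := by
  have hden : (∏ i ∈ T, ((x i).den : ℚ)) ≠ 0 := prod_ne_zero_iff.mpr fun i _ => by positivity
  have hcast : ((∏ i ∈ T, (x i).num * (x i).den : ℤ) : ℚ)
      = (∏ i ∈ T, x i) * (∏ i ∈ T, ((x i).den : ℚ)) ^ 2 := by
    rw [← prod_pow, ← prod_mul_distrib]
    push_cast
    exact prod_congr rfl fun i _ => by rw [← Rat.mul_den_eq_num]; ring
  rw [← mul_div_cancel_right₀ (∏ i ∈ T, x i) (pow_ne_zero 2 hden), ← hcast]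
  exact (h.map (Int.castRingHom ℚ)).div (IsSquare.sq _)

theorem Rat.not_dvd_and_not_exists_sq_mod {x : ℚ} {p : ℕ}
    (h : ¬ IsSquare ((x.num * x.den : ℤ) : ZMod p)) :
    ¬ (p : ℤ) ∣ x.num ∧ ¬ p ∣ x.den ∧ ¬ ∃ y : ℤ, (p : ℤ) ∣ y ^ 2 * x.den - x.num := by
  refine ⟨fun hp => h ?_, fun hp => h ?_, fun ⟨y, hy⟩ => h ⟨y * x.den, ?_⟩⟩
  · rw [(ZMod.intCast_zmod_eq_zero_iff_dvd _ p).mpr (hp.mul_right _)]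
    exact IsSquare.zero
  · rw [(ZMod.intCast_zmod_eq_zero_iff_dvd _ p).mpr ((Int.natCast_dvd_natCast.mpr hp).mul_left _)]
    exact IsSquare.zero
  · have hnum := (ZMod.intCast_eq_intCast_iff_dvd_sub x.num (y ^ 2 * x.den) p).mpr hy
    push_cast at hnum ⊢
    rw [hnum]
    ring

theorem stmt_7_general (α β γ : ℚ)
    (h1 : ¬ ∃ q : ℚ, q ^ 2 = α) (h2 : ¬ ∃ q : ℚ, q ^ 2 = β) (h3 : ¬ ∃ q : ℚ, q ^ 2 = γ)
    (h4 : ¬ ∃ q : ℚ, q ^ 2 = α * β * γ) :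
    ∃ p : ℕ, p.Prime ∧
      ¬ (p : ℤ) ∣ α.num ∧ ¬ p ∣ α.den ∧ ¬ (p : ℤ) ∣ β.num ∧ ¬ p ∣ β.den ∧
      ¬ (p : ℤ) ∣ γ.num ∧ ¬ p ∣ γ.den ∧
      (¬ ∃ x : ℤ, (p : ℤ) ∣ (x ^ 2 * (α.den : ℤ) - α.num)) ∧
      (¬ ∃ x : ℤ, (p : ℤ) ∣ (x ^ 2 * (β.den : ℤ) - β.num)) ∧
      (¬ ∃ x : ℤ, (p : ℤ) ∣ (x ^ 2 * (γ.den : ℤ) - γ.num)) := by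
  have hsq : ∀ x : ℚ, (¬ ∃ q : ℚ, q ^ 2 = x) → ¬ IsSquare x :=
    fun x hx ⟨r, hr⟩ => hx ⟨r, by rw [hr, sq]⟩
  set x := ![α, β, γ]
  have hx : ∀ T : Finset (Fin 3), Odd #T → ¬ IsSquare (∏ i ∈ T, x i) := by
    have hodd : ∀ T : Finset (Fin 3), Odd #T → T = {0} ∨ T = {1} ∨ T = {2} ∨ T = univ := by decide
    intro T hT
    rcases hodd T hT with rfl | rfl | rfl | rfl
    · simpa [x] using hsq α h1
    · simpa [x] using hsq β h2
    · simpa [x] using hsq γ h3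
    · simpa [x, Fin.prod_univ_three] using hsq _ h4
  obtain ⟨p, hp, hJ⟩ := exists_prime_forall_jacobiSym_eq_neg_one (fun i => (x i).num * (x i).den)
    fun T hT hT' => hx T hT (Rat.isSquare_prod_of_isSquare_prod_num_mul_den T x hT')
  have hpx := fun i =>
    Rat.not_dvd_and_not_exists_sq_mod (ZMod.nonsquare_of_jacobiSym_eq_neg_one (hJ i))
  obtain ⟨hα₁, hα₂, hα₃⟩ := hpx 0
  obtain ⟨hβ₁, hβ₂, hβ₃⟩ := hpx 1
  obtain ⟨hγ₁, hγ₂, hγ₃⟩ := hpx 2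
  exact ⟨p, hp, hα₁, hα₂, hβ₁, hβ₂, hγ₁, hγ₂, hα₃, hβ₃, hγ₃⟩

/-- If none of the nonzero rationals `α, β, γ` is a rational square and `α*β*γ` is not a
rational square, then there exists a prime `p` (dividing no numerator or denominator of
`α, β, γ`) modulo which none of `α, β, γ` is a square. Here `α` is a square mod `p` iff
there is `x : ℤ` with `p ∣ x^2 * α.den - α.num`. -/
theorem stmt_7 (α β γ : ℚ) (hα : α ≠ 0) (hβ : β ≠ 0) (hγ : γ ≠ 0)
    (h1 : ¬ ∃ q : ℚ, q ^ 2 = α) (h2 : ¬ ∃ q : ℚ, q ^ 2 = β) (h3 : ¬ ∃ q : ℚ, q ^ 2 = γ)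
    (h4 : ¬ ∃ q : ℚ, q ^ 2 = α * β * γ) :
    ∃ p : ℕ, p.Prime ∧
      ¬ (p : ℤ) ∣ α.num ∧ ¬ p ∣ α.den ∧ ¬ (p : ℤ) ∣ β.num ∧ ¬ p ∣ β.den ∧
      ¬ (p : ℤ) ∣ γ.num ∧ ¬ p ∣ γ.den ∧
      (¬ ∃ x : ℤ, (p : ℤ) ∣ (x ^ 2 * (α.den : ℤ) - α.num)) ∧
      (¬ ∃ x : ℤ, (p : ℤ) ∣ (x ^ 2 * (β.den : ℤ) - β.num)) ∧
      (¬ ∃ x : ℤ, (p : ℤ) ∣ (x ^ 2 * (γ.den : ℤ) - γ.num)) :=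
  stmt_7_general α β γ h1 h2 h3 h4
end

section
/- Let a, b, c be nonzero integers and n a positive natural number. If there exists a prime p with p > max(|a|+|b|, |c|) such that none of a/c, b/c, (a+b)/c is an n-th power modulo p, then the equation a·x + b·y = c·w·z^n (in the variables w, x, y, z) is not partition regular over ℚ \ {0}. -/
/-- The `p`-free part of an integer: `m / p ^ (padicValInt p m)`. -/
def ipartFn (p : ℕ) (m : ℤ) : ℤ := m / (p : ℤ) ^ padicValInt p m

lemma ipart_spec {p : ℕ} [hp : Fact p.Prime] {m : ℤ} (hm : m ≠ 0) :
    m = (p : ℤ) ^ padicValInt p m * ipartFn p m ∧ ¬ (p : ℤ) ∣ ipartFn p m := by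
  have hd : (p : ℤ) ^ padicValInt p m ∣ m := padicValInt_dvd m
  have h1 : m = (p : ℤ) ^ padicValInt p m * ipartFn p m := (Int.mul_ediv_cancel' hd).symm
  refine ⟨h1, ?_⟩
  rintro ⟨u, hu⟩
  have hdvd : (p : ℤ) ^ (padicValInt p m + 1) ∣ m := by
    refine ⟨u, ?_⟩
    conv_lhs => rw [h1]
    rw [hu]; ring
  rcases (padicValInt_dvd_iff _ m).mp hdvd with h | h
  · exact hm h
  · omega

lemma pow_mul_inj {p : ℕ} [hp : Fact p.Prime] {α β : ℕ} {A B : ℤ}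
    (hA : ¬ (p : ℤ) ∣ A) (hB : ¬ (p : ℤ) ∣ B)
    (h : (p : ℤ) ^ α * A = (p : ℤ) ^ β * B) : α = β ∧ A = B := by
  have hp0 : (p : ℤ) ≠ 0 := by exact_mod_cast hp.out.ne_zero
  have key : ∀ {α β : ℕ} {A B : ℤ}, ¬ (p:ℤ) ∣ A → ¬ (p:ℤ) ∣ B →
      (p:ℤ) ^ α * A = (p:ℤ) ^ β * B → α ≤ β → α = β ∧ A = B := by
    intro α β A B hA hB h hle
    obtain ⟨k, rfl⟩ := Nat.exists_eq_add_of_le hle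
    rw [pow_add, mul_assoc] at h
    have h2 : A = (p:ℤ) ^ k * B := mul_left_cancel₀ (pow_ne_zero _ hp0) h
    rcases Nat.eq_zero_or_pos k with hk | hk
    · subst hk; simp only [pow_zero, one_mul] at h2; exact ⟨by omega, h2⟩
    · exact absurd (h2 ▸ Dvd.dvd.mul_right (dvd_pow_self _ hk.ne') B) hA
  rcases le_total α β with hle | hle
  · exact key hA hB h hle
  · obtain ⟨hq, hAB⟩ := key hB hA h.symm hle
    exact ⟨hq.symm, hAB.symm⟩

lemma ipart_mul {p : ℕ} [hp : Fact p.Prime] {m1 m2 : ℤ} (h1 : m1 ≠ 0) (h2 : m2 ≠ 0) :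
    ipartFn p (m1 * m2) = ipartFn p m1 * ipartFn p m2 := by
  obtain ⟨e1, d1⟩ := ipart_spec (p := p) h1
  obtain ⟨e2, d2⟩ := ipart_spec (p := p) h2
  obtain ⟨e3, d3⟩ := ipart_spec (p := p) (mul_ne_zero h1 h2)
  have hprime : Prime (p : ℤ) := Nat.prime_iff_prime_int.mp hp.out
  have hnd : ¬ (p : ℤ) ∣ ipartFn p m1 * ipartFn p m2 := by
    intro h
    rcases hprime.dvd_mul.mp h with h | h
    exacts [d1 h, d2 h]
  have h : (p:ℤ) ^ padicValInt p (m1 * m2) * ipartFn p (m1 * m2)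
      = (p:ℤ) ^ (padicValInt p m1 + padicValInt p m2) * (ipartFn p m1 * ipartFn p m2) := by
    rw [← e3]
    conv_lhs => rw [e1, e2]
    rw [pow_add]; ring
  exact (pow_mul_inj d3 hnd h).2

lemma ipart_pow {p : ℕ} [hp : Fact p.Prime] {m : ℤ} (hm : m ≠ 0) (k : ℕ) :
    ipartFn p (m ^ k) = (ipartFn p m) ^ k := by
  induction k with
  | zero => simp [ipartFn, padicValInt.one]
  | succ k ih => rw [pow_succ, ipart_mul (pow_ne_zero _ hm) hm, ih, pow_succ]

/-- color of a rational: residue of its p-unit part -/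
noncomputable def pcol (p : ℕ) (q : ℚ) : ZMod p :=
  ((ipartFn p q.num : ℤ) : ZMod p) * ((ipartFn p (q.den : ℤ) : ℤ) : ZMod p)⁻¹

lemma keycase {p : ℕ} [hp : Fact p.Prime] (a b c : ℤ) (n : ℕ)
    (hpa : ¬ (p:ℤ) ∣ a) (hpab : ¬ (p:ℤ) ∣ (a + b)) (hpc : ¬ (p:ℤ) ∣ c)
    {X Y W Z : ℤ} (hX : X ≠ 0) (hY : Y ≠ 0) (hW : W ≠ 0) (hZ : Z ≠ 0)
    (hXY : ((ipartFn p X : ℤ) : ZMod p) = ((ipartFn p Y : ℤ) : ZMod p))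
    (hv : padicValInt p X ≤ padicValInt p Y)
    (hE : a * X + b * Y = c * W * Z ^ n) :
    ∃ d : ℤ, (d = a ∨ d = a + b) ∧
      (d : ZMod p) * ((ipartFn p X : ℤ) : ZMod p)
        = (c : ZMod p) * ((ipartFn p W : ℤ) : ZMod p) * ((ipartFn p Z : ℤ) : ZMod p) ^ n := by
  have hprime : Prime (p : ℤ) := Nat.prime_iff_prime_int.mp hp.out
  obtain ⟨eX, dX⟩ := ipart_spec (p := p) hX
  obtain ⟨eY, dY⟩ := ipart_spec (p := p) hY
  obtain ⟨eW, dW⟩ := ipart_spec (p := p) hW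
  obtain ⟨eZ, dZ⟩ := ipart_spec (p := p) hZ
  obtain ⟨k, hk⟩ : ∃ k, padicValInt p Y = padicValInt p X + k :=
    ⟨padicValInt p Y - padicValInt p X, by omega⟩
  set S : ℤ := a * ipartFn p X + b * (p:ℤ) ^ k * ipartFn p Y with hS
  have hE2 : (p:ℤ) ^ padicValInt p X * S
      = (p:ℤ) ^ (padicValInt p W + n * padicValInt p Z)
        * (c * ipartFn p W * (ipartFn p Z) ^ n) := by
    have l1 : (p:ℤ) ^ padicValInt p X * S = a * X + b * Y := by
      conv_rhs => rw [eX, eY]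
      rw [hk, hS, pow_add]; ring
    have l2 : c * W * Z ^ n
        = (p:ℤ) ^ (padicValInt p W + n * padicValInt p Z)
          * (c * ipartFn p W * (ipartFn p Z) ^ n) := by
      conv_lhs => rw [eW, eZ]
      rw [pow_add, pow_mul, mul_pow]; ring
    rw [l1, hE, l2]
  -- value of S mod p
  have hXne : ((ipartFn p X : ℤ) : ZMod p) ≠ 0 := by
    rw [Ne, ZMod.intCast_zmod_eq_zero_iff_dvd]; exact dX
  obtain ⟨d, hdor, hdS⟩ : ∃ d : ℤ, (d = a ∨ d = a + b) ∧
      (S : ZMod p) = (d : ZMod p) * ((ipartFn p X : ℤ) : ZMod p) := by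
    rcases Nat.eq_zero_or_pos k with hk0 | hk0
    · refine ⟨a + b, Or.inr rfl, ?_⟩
      rw [hS]; push_cast
      rw [hk0, ← hXY]
      ring
    · refine ⟨a, Or.inl rfl, ?_⟩
      rw [hS]; push_cast
      rw [ZMod.natCast_self, zero_pow hk0.ne']
      ring
  have hdne : ((d : ℤ) : ZMod p) ≠ 0 := by
    rw [Ne, ZMod.intCast_zmod_eq_zero_iff_dvd]
    rcases hdor with rfl | rfl
    exacts [hpa, hpab]
  have hSnd : ¬ (p:ℤ) ∣ S := by
    rw [← ZMod.intCast_zmod_eq_zero_iff_dvd, hdS]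
    exact mul_ne_zero hdne hXne
  have hRnd : ¬ (p:ℤ) ∣ c * ipartFn p W * (ipartFn p Z) ^ n := by
    intro h
    rcases hprime.dvd_mul.mp h with h | h
    · rcases hprime.dvd_mul.mp h with h | h
      exacts [hpc h, dW h]
    · exact dZ (hprime.dvd_of_dvd_pow h)
  have hfin := (pow_mul_inj hSnd hRnd hE2).2
  refine ⟨d, hdor, ?_⟩
  have := congrArg (fun m : ℤ => (m : ZMod p)) hfin
  rw [hdS] at this
  rw [this]
  push_cast
  ring

lemma fz_eq {p : ℕ} [hp : Fact p.Prime] {q : ℚ} (hq : q ≠ 0) {m t : ℤ} (hm : m ≠ 0) (ht : t ≠ 0)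
    (h : m * (q.den : ℤ) = q.num * t) :
    ((ipartFn p m : ℤ) : ZMod p) = pcol p q * ((ipartFn p t : ℤ) : ZMod p) := by
  have hden : ((q.den : ℤ)) ≠ 0 := Int.natCast_ne_zero.mpr q.den_nz
  have hnum : q.num ≠ 0 := Rat.num_ne_zero.mpr hq
  have h2 : ipartFn p m * ipartFn p (q.den : ℤ) = ipartFn p q.num * ipartFn p t := by
    rw [← ipart_mul hm hden, ← ipart_mul hnum ht, h]
  have h3 := congrArg (fun r : ℤ => ((r : ℤ) : ZMod p)) h2
  push_cast at h3
  have hdenp : ((ipartFn p (q.den : ℤ) : ℤ) : ZMod p) ≠ 0 := by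
    rw [Ne, ZMod.intCast_zmod_eq_zero_iff_dvd]
    exact (ipart_spec hden).2
  rw [pcol]
  field_simp
  linear_combination h3

/-- If there is a prime `p > max(|a|+|b|, |c|)` such that none of `a/c, b/c, (a+b)/c` is an
`n`-th power modulo `p` (i.e. there is no `x : ℤ` with `x^n * c ≡ a (mod p)`, etc.), then
the equation `a*x + b*y = c*w*z^n` is not partition regular over `ℚ \ {0}`. -/
theorem stmt_10 (a b c : ℤ) (ha : a ≠ 0) (hb : b ≠ 0) (hc : c ≠ 0) (n : ℕ) (hn : 0 < n)
    (p : ℕ) (hp : p.Prime) (hgt : max (|a| + |b|) |c| < (p : ℤ))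
    (hA : ¬ ∃ x : ℤ, (p : ℤ) ∣ (x ^ n * c - a))
    (hB : ¬ ∃ x : ℤ, (p : ℤ) ∣ (x ^ n * c - b))
    (hC : ¬ ∃ x : ℤ, (p : ℤ) ∣ (x ^ n * c - (a + b))) :
    ¬ ∀ (r : ℕ) (C : ℚ → Fin r), ∃ w x y z : ℚ,
      w ≠ 0 ∧ x ≠ 0 ∧ y ≠ 0 ∧ z ≠ 0 ∧
      C w = C x ∧ C x = C y ∧ C y = C z ∧
      (a : ℚ) * x + (b : ℚ) * y = (c : ℚ) * w * z ^ n := by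
  intro H
  haveI hf : Fact p.Prime := ⟨hp⟩
  haveI : NeZero p := ⟨hp.ne_zero⟩
  have hab : a + b ≠ 0 := by
    intro h
    refine hC ⟨(p : ℤ), ?_⟩
    rw [h, sub_zero]
    exact dvd_mul_of_dvd_left (dvd_pow_self _ hn.ne') c
  have hsmall : ∀ m : ℤ, m ≠ 0 → |m| < (p : ℤ) → ¬ (p : ℤ) ∣ m := by
    intro m hm hlt hdvd
    have h1 : (p : ℤ) ∣ |m| := (dvd_abs _ _).mpr hdvd
    have := Int.le_of_dvd (abs_pos.mpr hm) h1
    omega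
  have habs : |a| + |b| < (p : ℤ) := lt_of_le_of_lt (le_max_left _ _) hgt
  have hpa : ¬ (p : ℤ) ∣ a := hsmall a ha (by have := abs_nonneg b; omega)
  have hpb : ¬ (p : ℤ) ∣ b := hsmall b hb (by have := abs_nonneg a; omega)
  have hpc : ¬ (p : ℤ) ∣ c := hsmall c hc (lt_of_le_of_lt (le_max_right _ _) hgt)
  have hpab : ¬ (p : ℤ) ∣ (a + b) := hsmall _ hab (by have := abs_add_le a b; omega)
  obtain ⟨w, x, y, z, hw, hx, hy, hz, e1, e2, e3, heq⟩ :=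
    H p (fun q => ⟨(pcol p q).val, ZMod.val_lt _⟩)
  have ecol : ∀ {q r : ℚ}, (⟨(pcol p q).val, ZMod.val_lt _⟩ : Fin p)
      = ⟨(pcol p r).val, ZMod.val_lt _⟩ → pcol p q = pcol p r := by
    intro q r h
    exact ZMod.val_injective p (congrArg Fin.val h)
  have c1 := ecol e1
  have c2 := ecol e2
  have c3 := ecol e3
  have hdq : ∀ q : ℚ, ((q.den : ℤ)) ≠ 0 := fun q => Int.natCast_ne_zero.mpr q.den_nz
  set N : ℤ := (w.den : ℤ) * x.den * y.den * z.den with hN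
  have hNne : N ≠ 0 :=
    mul_ne_zero (mul_ne_zero (mul_ne_zero (hdq w) (hdq x)) (hdq y)) (hdq z)
  set X : ℤ := x.num * ((w.den : ℤ) * y.den * z.den) * N ^ n with hXdef
  set Y : ℤ := y.num * ((w.den : ℤ) * x.den * z.den) * N ^ n with hYdef
  set W : ℤ := w.num * ((x.den : ℤ) * y.den * z.den) with hWdef
  set Z : ℤ := z.num * ((w.den : ℤ) * x.den * y.den) with hZdef
  have hnum : ∀ q : ℚ, ((q.num : ℤ) : ℚ) = q * ((q.den : ℕ) : ℚ) := fun q =>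
    (div_eq_iff (by exact_mod_cast q.den_nz : ((q.den : ℕ) : ℚ) ≠ 0)).mp (Rat.num_div_den q)
  have hXne : X ≠ 0 := mul_ne_zero (mul_ne_zero (Rat.num_ne_zero.mpr hx)
    (mul_ne_zero (mul_ne_zero (hdq w) (hdq y)) (hdq z))) (pow_ne_zero _ hNne)
  have hYne : Y ≠ 0 := mul_ne_zero (mul_ne_zero (Rat.num_ne_zero.mpr hy)
    (mul_ne_zero (mul_ne_zero (hdq w) (hdq x)) (hdq z))) (pow_ne_zero _ hNne)
  have hWne : W ≠ 0 := mul_ne_zero (Rat.num_ne_zero.mpr hw)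
    (mul_ne_zero (mul_ne_zero (hdq x) (hdq y)) (hdq z))
  have hZne : Z ≠ 0 := mul_ne_zero (Rat.num_ne_zero.mpr hz)
    (mul_ne_zero (mul_ne_zero (hdq w) (hdq x)) (hdq y))
  have hE : a * X + b * Y = c * W * Z ^ n := by
    have key : ((a * X + b * Y : ℤ) : ℚ) = ((c * W * Z ^ n : ℤ) : ℚ) := by
      rw [hXdef, hYdef, hWdef, hZdef, hN]
      push_cast
      rw [hnum w, hnum x, hnum y, hnum z]
      linear_combination (((w.den : ℚ) * x.den * y.den * z.den) ^ n *
        ((w.den : ℚ) * x.den * y.den * z.den)) * heq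
    exact_mod_cast key
  -- residues
  set T : ZMod p := ((ipartFn p N : ℤ) : ZMod p) with hT
  set u0 : ZMod p := pcol p x with hu0
  have hTne : T ≠ 0 := by
    rw [hT, Ne, ZMod.intCast_zmod_eq_zero_iff_dvd]
    exact (ipart_spec hNne).2
  have hu0ne : u0 ≠ 0 := by
    rw [hu0, pcol]
    refine mul_ne_zero ?_ (inv_ne_zero ?_) <;>
      rw [Ne, ZMod.intCast_zmod_eq_zero_iff_dvd]
    · exact (ipart_spec (Rat.num_ne_zero.mpr hx)).2
    · exact (ipart_spec (hdq x)).2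
  have hNpow : ((ipartFn p (N ^ (n + 1)) : ℤ) : ZMod p) = T ^ (n + 1) := by
    rw [ipart_pow hNne, hT]
    push_cast
    ring
  have hfX : ((ipartFn p X : ℤ) : ZMod p) = u0 * T ^ (n + 1) := by
    have h := fz_eq (p := p) hx (m := X) (t := N ^ (n + 1)) hXne (pow_ne_zero _ hNne)
      (by rw [hXdef, hN]; ring)
    rw [h, hNpow, ← hu0]
  have hfY : ((ipartFn p Y : ℤ) : ZMod p) = u0 * T ^ (n + 1) := by
    have h := fz_eq (p := p) hy (m := Y) (t := N ^ (n + 1)) hYne (pow_ne_zero _ hNne)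
      (by rw [hYdef, hN]; ring)
    rw [h, hNpow, ← c2]
  have hfW : ((ipartFn p W : ℤ) : ZMod p) = u0 * T := by
    have h := fz_eq (p := p) hw (m := W) (t := N) hWne hNne (by rw [hWdef, hN]; ring)
    rw [h, c1]
  have hfZ : ((ipartFn p Z : ℤ) : ZMod p) = u0 * T := by
    have h := fz_eq (p := p) hz (m := Z) (t := N) hZne hNne (by rw [hZdef, hN]; ring)
    rw [h, ← c3, ← c2]
  have main : ∃ d : ℤ, (d = a ∨ d = b ∨ d = a + b) ∧
      (d : ZMod p) * (u0 * T ^ (n + 1)) = (c : ZMod p) * (u0 * T) * (u0 * T) ^ n := by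
    rcases le_total (padicValInt p X) (padicValInt p Y) with hv | hv
    · obtain ⟨d, hdor, hd⟩ := keycase a b c n hpa hpab hpc hXne hYne hWne hZne
        (by rw [hfX, hfY]) hv hE
      refine ⟨d, by tauto, ?_⟩
      rw [hfX, hfW, hfZ] at hd
      exact hd
    · obtain ⟨d, hdor, hd⟩ := keycase b a c n hpb (by rwa [add_comm b a]) hpc hYne hXne
        hWne hZne (by rw [hfX, hfY]) hv (by linear_combination hE)
      refine ⟨d, ?_, ?_⟩
      · rcases hdor with h | h
        · exact Or.inr (Or.inl h)
        · exact Or.inr (Or.inr (by omega))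
      · rw [hfY, hfW, hfZ] at hd
        exact hd
  obtain ⟨d, hdor, hd⟩ := main
  have hdval : (d : ZMod p) = (c : ZMod p) * u0 ^ n := by
    have h2 : (d : ZMod p) * (u0 * T ^ (n + 1))
        = ((c : ZMod p) * u0 ^ n) * (u0 * T ^ (n + 1)) := by
      rw [hd]; ring
    exact mul_right_cancel₀ (mul_ne_zero hu0ne (pow_ne_zero _ hTne)) h2
  have hs : ((u0.val : ℕ) : ZMod p) = u0 := by
    rw [ZMod.natCast_val, ZMod.cast_id]
  have hdvds : (p : ℤ) ∣ (((u0.val : ℤ)) ^ n * c - d) := by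
    rw [← ZMod.intCast_zmod_eq_zero_iff_dvd]
    push_cast
    rw [hs, hdval]
    ring
  rcases hdor with rfl | rfl | rfl
  · exact hA ⟨(u0.val : ℤ), hdvds⟩
  · exact hB ⟨(u0.val : ℤ), hdvds⟩
  · exact hC ⟨(u0.val : ℤ), hdvds⟩
end

section
/- Let a, b, c be nonzero integers and n a positive natural number such that the equation a·x + b·y = c·w·z^n (in the variables w, x, y, z) is partition regular over ℕ. If p is a prime such that the p-adic valuation v_p((a+b)/c) is neither 0 nor a positive multiple of n, then the equation is p-partition regular: for every k ∈ ℕ ∪ {0} and every finite partition of p^k·ℕ = {p^k·j : j ∈ ℕ, j ≥ 1}, some cell of the partition contains w, x, y, z satisfying a·x + b·y = c·w·z^n. -/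
/-!
Refine the given colouring: keep the colour of multiples of `p ^ k`, and colour every other `m`
by its residue modulo `p ^ N`, where `N = k + v_p(a + b)`. A monochromatic solution for the
refined colouring either lies in `p ^ k ℕ`, or consists of four numbers congruent modulo `p ^ N`,
hence of a common valuation `e < k`. In the second case `x ≡ y` modulo a power of `p` exceeding
`p ^ (v_p(a + b) + e)`, so writing `a x + b y = (a + b) y + a (x - y)` gives
`v_p(a x + b y) = v_p(a + b) + e`, while `v_p(c w z ^ n) = v_p(c) + e + n e`. Thus
`v_p((a + b) / c) = n e`, which the hypotheses on `v_p((a + b) / c)` forbid.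
-/

section Valuation

variable {p : ℕ} [Fact p.Prime]

lemma padicValInt_add_of_pow_succ_dvd {t u : ℤ} (ht : t ≠ 0)
    (hu : (p : ℤ) ^ (padicValInt p t + 1) ∣ u) : padicValInt p (t + u) = padicValInt p t := by
  have hdvd : (p : ℤ) ^ padicValInt p t ∣ t + u :=
    dvd_add (padicValInt_dvd t) ((pow_dvd_pow _ (Nat.le_succ _)).trans hu)
  have hndvd : ¬ (p : ℤ) ^ (padicValInt p t + 1) ∣ t + u := fun h => by
    have := (padicValInt_dvd_iff _ t).1 ((dvd_add_left hu).1 h)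
    omega
  rw [padicValInt_dvd_iff] at hdvd hndvd
  omega

lemma padicValInt_eq_of_pow_dvd_sub {x y : ℤ} {N : ℕ} (hx : x ≠ 0) (hN : padicValInt p x < N)
    (hxy : (p : ℤ) ^ N ∣ y - x) : padicValInt p y = padicValInt p x := by
  rw [← add_sub_cancel x y]
  exact padicValInt_add_of_pow_succ_dvd hx ((pow_dvd_pow _ hN).trans hxy)

lemma padicValInt_pow (z : ℤ) (n : ℕ) : padicValInt p (z ^ n) = n * padicValInt p z := by
  rw [padicValInt, Int.natAbs_pow, padicValNat.pow, padicValInt]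

lemma padicValInt_mul_add_mul {a b x y : ℤ} (hab : a + b ≠ 0) (hy : y ≠ 0)
    (hxy : (p : ℤ) ^ (padicValInt p (a + b) + padicValInt p y + 1) ∣ x - y) :
    padicValInt p (a * x + b * y) = padicValInt p (a + b) + padicValInt p y := by
  have hv := padicValInt.mul (p := p) hab hy
  rw [show a * x + b * y = (a + b) * y + a * (x - y) by ring,
    padicValInt_add_of_pow_succ_dvd (mul_ne_zero hab hy) (by rw [hv]; exact hxy.mul_left a), hv]

lemma padicValInt_add_eq_of_congruent_solution {a b c w x y z : ℤ} {n N : ℕ} (hab : a + b ≠ 0)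
    (hc : c ≠ 0) (hw : w ≠ 0) (hx : x ≠ 0) (hy : y ≠ 0) (hz : z ≠ 0)
    (hN : padicValInt p (a + b) + padicValInt p x < N) (hwx : (p : ℤ) ^ N ∣ w - x)
    (hyx : (p : ℤ) ^ N ∣ y - x) (hzx : (p : ℤ) ^ N ∣ z - x)
    (heq : a * x + b * y = c * w * z ^ n) :
    padicValInt p (a + b) = padicValInt p c + n * padicValInt p x := by
  have hvw := padicValInt_eq_of_pow_dvd_sub hx (by omega) hwx
  have hvy := padicValInt_eq_of_pow_dvd_sub hx (by omega) hyx
  have hvz := padicValInt_eq_of_pow_dvd_sub hx (by omega) hzx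
  have hxy : (p : ℤ) ^ (padicValInt p (a + b) + padicValInt p y + 1) ∣ x - y := by
    rw [hvy, ← dvd_neg, neg_sub]
    exact (pow_dvd_pow _ hN).trans hyx
  have hval := congrArg (padicValInt p) heq
  rw [padicValInt_mul_add_mul hab hy hxy, padicValInt.mul (mul_ne_zero hc hw) (pow_ne_zero n hz),
    padicValInt.mul hc hw, padicValInt_pow, hvw, hvy, hvz] at hval
  omega

lemma padicValInt_add_ne_of_padicValRat_div_ne {a b c : ℤ} {n : ℕ} (hab : a + b ≠ 0) (hc : c ≠ 0)
    (hv0 : padicValRat p (((a : ℚ) + b) / c) ≠ 0)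
    (hvn : ∀ m : ℕ, 0 < m → padicValRat p (((a : ℚ) + b) / c) ≠ n * m) (e : ℕ) :
    padicValInt p (a + b) ≠ padicValInt p c + n * e := by
  intro h
  have hv : padicValRat p (((a : ℚ) + b) / c) = n * e := by
    rw [← Int.cast_add, padicValRat.div (by exact_mod_cast hab) (by exact_mod_cast hc),
      padicValRat.of_int, padicValRat.of_int, h]
    push_cast
    ring
  rcases e.eq_zero_or_pos with rfl | he
  · exact hv0 (by simpa using hv)
  · exact hvn e he hv

end Valuation

section Colouring

variable {α : Type*} (d M : ℕ) (C : ℕ → α) {m₁ m₂ : ℕ}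

def residueColouring (m : ℕ) : α ⊕ ZMod M :=
  if d ∣ m then .inl (C m) else .inr m

variable {d M C}

lemma dvd_iff_of_residueColouring_eq
    (h : residueColouring d M C m₁ = residueColouring d M C m₂) : d ∣ m₁ ↔ d ∣ m₂ := by
  unfold residueColouring at h
  split_ifs at h <;> simp_all

lemma eq_of_residueColouring_eq_of_dvd (h₁ : d ∣ m₁) (h₂ : d ∣ m₂)
    (h : residueColouring d M C m₁ = residueColouring d M C m₂) : C m₁ = C m₂ := by
  simpa [residueColouring, h₁, h₂] using h

lemma dvd_sub_of_residueColouring_eq_of_not_dvd (h₁ : ¬ d ∣ m₁) (h₂ : ¬ d ∣ m₂)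
    (h : residueColouring d M C m₁ = residueColouring d M C m₂) : (M : ℤ) ∣ m₁ - m₂ := by
  simp only [residueColouring, h₁, h₂, if_false, Sum.inr.injEq] at h
  rw [← ZMod.intCast_eq_intCast_iff_dvd_sub]
  exact_mod_cast h.symm

end Colouring

lemma exists_pos_eq_mul_of_dvd {d m : ℕ} (hm : 0 < m) (h : d ∣ m) : ∃ j, 0 < j ∧ m = d * j := by
  obtain ⟨j, rfl⟩ := h
  exact ⟨j, Nat.pos_of_mul_pos_left hm, rfl⟩

theorem stmt_12_general (a b c : ℤ) (hc : c ≠ 0) (n : ℕ)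
    (hPR : ∀ (r : ℕ) (C : ℕ → Fin r), ∃ w x y z : ℕ,
      0 < w ∧ 0 < x ∧ 0 < y ∧ 0 < z ∧
      C w = C x ∧ C x = C y ∧ C y = C z ∧
      a * (x : ℤ) + b * (y : ℤ) = c * (w : ℤ) * (z : ℤ) ^ n)
    (p : ℕ) (hp : p.Prime)
    (hv0 : padicValRat p (((a : ℚ) + (b : ℚ)) / (c : ℚ)) ≠ 0)
    (hvn : ∀ m : ℕ, 0 < m → padicValRat p (((a : ℚ) + (b : ℚ)) / (c : ℚ)) ≠ (n : ℤ) * m) :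
    ∀ (k : ℕ) (r : ℕ) (C : ℕ → Fin r), ∃ w x y z : ℕ,
      (∃ j : ℕ, 0 < j ∧ w = p ^ k * j) ∧ (∃ j : ℕ, 0 < j ∧ x = p ^ k * j) ∧
      (∃ j : ℕ, 0 < j ∧ y = p ^ k * j) ∧ (∃ j : ℕ, 0 < j ∧ z = p ^ k * j) ∧
      C w = C x ∧ C x = C y ∧ C y = C z ∧
      a * (x : ℤ) + b * (y : ℤ) = c * (w : ℤ) * (z : ℤ) ^ n := by
  intro k r C
  have : Fact p.Prime := ⟨hp⟩
  have hab : a + b ≠ 0 := fun h => hv0 (by rw [← Int.cast_add, h]; simp)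
  set N := k + padicValInt p (a + b)
  set χ := residueColouring (p ^ k) (p ^ N) C
  set ι := Fintype.equivFin (Fin r ⊕ ZMod (p ^ N))
  obtain ⟨w, x, y, z, hw, hx, hy, hz, hwx, hxy, hyz, heq⟩ := hPR _ (ι ∘ χ)
  have hwx : χ w = χ x := ι.injective hwx
  have hyx : χ y = χ x := (ι.injective hxy).symm
  have hzx : χ z = χ x := (ι.injective (hxy.trans hyz)).symm
  by_cases hkx : p ^ k ∣ x
  · have hkw := (dvd_iff_of_residueColouring_eq hwx).2 hkx
    have hky := (dvd_iff_of_residueColouring_eq hyx).2 hkx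
    have hkz := (dvd_iff_of_residueColouring_eq hzx).2 hkx
    have hCy := eq_of_residueColouring_eq_of_dvd hky hkx hyx
    exact ⟨w, x, y, z, exists_pos_eq_mul_of_dvd hw hkw, exists_pos_eq_mul_of_dvd hx hkx,
      exists_pos_eq_mul_of_dvd hy hky, exists_pos_eq_mul_of_dvd hz hkz,
      eq_of_residueColouring_eq_of_dvd hkw hkx hwx, hCy.symm,
      hCy.trans (eq_of_residueColouring_eq_of_dvd hkz hkx hzx).symm, heq⟩
  · have hvx : padicValNat p x < k :=
      not_le.1 fun h => hkx ((padicValNat_dvd_iff_le hx.ne').2 h)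
    have hcong : ∀ {m}, χ m = χ x → (p : ℤ) ^ N ∣ m - x := fun h => by
      exact_mod_cast dvd_sub_of_residueColouring_eq_of_not_dvd
        (mt (dvd_iff_of_residueColouring_eq h).1 hkx) hkx h
    refine absurd ?_ (padicValInt_add_ne_of_padicValRat_div_ne hab hc hv0 hvn (padicValNat p x))
    rw [← padicValInt.of_nat]
    exact padicValInt_add_eq_of_congruent_solution hab hc (by positivity) (by positivity)
      (by positivity) (by positivity) (by rw [padicValInt.of_nat]; omega)
      (hcong hwx) (hcong hyx) (hcong hzx) heq

/-- If `a*x + b*y = c*w*z^n` is partition regular over the positive integers and `p` is a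
prime such that `v_p((a+b)/c)` is neither `0` nor a positive multiple of `n`, then the
equation is `p`-partition regular: for every `k`, every finite partition of
`p^k·ℕ = {p^k * j : j ≥ 1}` has a cell containing a solution. -/
theorem stmt_12 (a b c : ℤ) (ha : a ≠ 0) (hb : b ≠ 0) (hc : c ≠ 0) (n : ℕ) (hn : 0 < n)
    (hPR : ∀ (r : ℕ) (C : ℕ → Fin r), ∃ w x y z : ℕ,
      0 < w ∧ 0 < x ∧ 0 < y ∧ 0 < z ∧
      C w = C x ∧ C x = C y ∧ C y = C z ∧
      a * (x : ℤ) + b * (y : ℤ) = c * (w : ℤ) * (z : ℤ) ^ n)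
    (p : ℕ) (hp : p.Prime)
    (hv0 : padicValRat p (((a : ℚ) + (b : ℚ)) / (c : ℚ)) ≠ 0)
    (hvn : ∀ m : ℕ, 0 < m → padicValRat p (((a : ℚ) + (b : ℚ)) / (c : ℚ)) ≠ (n : ℤ) * m) :
    ∀ (k : ℕ) (r : ℕ) (C : ℕ → Fin r), ∃ w x y z : ℕ,
      (∃ j : ℕ, 0 < j ∧ w = p ^ k * j) ∧ (∃ j : ℕ, 0 < j ∧ x = p ^ k * j) ∧
      (∃ j : ℕ, 0 < j ∧ y = p ^ k * j) ∧ (∃ j : ℕ, 0 < j ∧ z = p ^ k * j) ∧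
      C w = C x ∧ C x = C y ∧ C y = C z ∧
      a * (x : ℤ) + b * (y : ℤ) = c * (w : ℤ) * (z : ℤ) ^ n :=
  stmt_12_general a b c hc n hPR p hp hv0 hvn
end

section
/- Let a, b, c be nonzero integers and n a positive natural number such that the equation a·x + b·y = c·w·z^n (in the variables w, x, y, z) is partition regular over ℕ. If p is a prime such that the p-adic valuation v_p((a+b)/c) is neither 0 nor a positive multiple of n, then at least one of a/c, b/c, (a+b)/c is an n-th power in the field ℚ_p of p-adic numbers. -/
/-! Colour `m = p ^ e * u` (with `p ∤ u`) by `e mod L` and `u mod p ^ K`, where `n ∣ L`. By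
Hensel's lemma every `s` with `‖s - T ^ n‖ < ‖n‖² ‖s‖` is an `n`-th power. In a monochromatic
solution `w / x` is `p ^ (n k)` times a quotient of units congruent mod `p ^ K`, so `c w z ^ n / x`
is that close to `(p ^ k z) ^ n`. If `‖b y‖ < ‖n‖² ‖a x‖`, the term `b y` is negligible and `a / c`
is an `n`-th power; symmetrically for `b / c`. Otherwise `a x` and `b y` have comparable size, which
for `L` large forces `v_p(x) = v_p(y)`; then `x ≡ y` to high `p`-adic precision, and `(a + b) x` is
close to `c w z ^ n`. -/

open Polynomial Filter

section Ultrametric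

variable {E : Type*} [SeminormedAddGroup E] [IsUltrametricDist E]

theorem norm_sub_lt_mul_of_norm_sub_lt_mul {r : ℝ} (hr : r ≤ 1) {a b c : E}
    (hab : ‖a - b‖ < r * ‖a‖) (hbc : ‖b - c‖ < r * ‖b‖) : ‖a - c‖ < r * ‖a‖ := by
  have hr0 : 0 ≤ r := by
    by_contra! h
    linarith [norm_nonneg (a - b), mul_nonpos_of_nonpos_of_nonneg h.le (norm_nonneg a)]
  have hb : ‖b‖ ≤ ‖a‖ := by
    calc ‖b‖ = ‖(b - a) + a‖ := by rw [sub_add_cancel]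
      _ ≤ max ‖b - a‖ ‖a‖ := IsUltrametricDist.norm_add_le_max _ _
      _ ≤ ‖a‖ := max_le (by
          rw [norm_sub_rev]; exact hab.le.trans (mul_le_of_le_one_left (norm_nonneg a) hr)) le_rfl
  calc ‖a - c‖ = ‖(a - b) + (b - c)‖ := by rw [sub_add_sub_cancel]
    _ ≤ max ‖a - b‖ ‖b - c‖ := IsUltrametricDist.norm_add_le_max _ _
    _ < r * ‖a‖ := max_lt hab (hbc.trans_le (mul_le_mul_of_nonneg_left hb hr0))

end Ultrametric

def padicColor (p L K m : ℕ) : ZMod L × ZMod (p ^ K) := (m.factorization p, ordCompl[p] m)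

theorem padicColor_eq_iff {p L K m m' : ℕ} :
    padicColor p L K m = padicColor p L K m' ↔
      m.factorization p ≡ m'.factorization p [MOD L] ∧
        ordCompl[p] m ≡ ordCompl[p] m' [MOD p ^ K] := by
  simp [padicColor, ZMod.natCast_eq_natCast_iff]

namespace Padic

variable {p : ℕ} [Fact p.Prime]

theorem norm_natCast_sq_le_one (n : ℕ) : ‖(n : ℚ_[p])‖ ^ 2 ≤ 1 :=
  pow_le_one₀ (norm_nonneg _) (by exact_mod_cast norm_int_le_one (p := p) n)

theorem exists_pow_eq_of_norm_sub_one_lt {n : ℕ} {u : ℚ_[p]}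
    (hu : ‖u - 1‖ < ‖(n : ℚ_[p])‖ ^ 2) : ∃ t : ℚ_[p], t ^ n = u := by
  have hu1 : ‖u‖ ≤ 1 := by
    calc ‖u‖ = ‖(u - 1) + 1‖ := by rw [sub_add_cancel]
      _ ≤ max ‖u - 1‖ ‖(1 : ℚ_[p])‖ := nonarchimedean _ _
      _ ≤ 1 := by rw [norm_one]; exact max_le (hu.le.trans (norm_natCast_sq_le_one n)) le_rfl
  obtain ⟨v, rfl⟩ : ∃ v : ℤ_[p], (v : ℚ_[p]) = u := ⟨⟨u, hu1⟩, rfl⟩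
  obtain ⟨t, ht, -⟩ := hensels_lemma (F := X ^ n - C v) (a := (1 : ℤ_[p])) (by
    simpa [derivative_X_pow, norm_sub_rev, PadicInt.norm_def] using hu)
  exact ⟨t, by simpa [sub_eq_zero] using congrArg ((↑) : ℤ_[p] → ℚ_[p]) ht⟩

theorem exists_pow_eq_of_norm_sub_pow_lt {n : ℕ} {s T : ℚ_[p]}
    (h : ‖s - T ^ n‖ < ‖(n : ℚ_[p])‖ ^ 2 * ‖s‖) : ∃ t : ℚ_[p], t ^ n = s := by
  have hs : ‖s - T ^ n‖ < ‖s‖ :=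
    h.trans_le (mul_le_of_le_one_left (norm_nonneg s) (norm_natCast_sq_le_one n))
  have hTs : ‖T ^ n‖ = ‖s‖ := (norm_eq_of_norm_sub_lt_left hs).symm
  have hT : T ^ n ≠ 0 := by
    rw [← norm_pos_iff, hTs]; exact (norm_nonneg _).trans_lt hs
  obtain ⟨v, hv⟩ := exists_pow_eq_of_norm_sub_one_lt (n := n) (u := s / T ^ n) (by
    rwa [div_sub_one hT, norm_div, hTs, div_lt_iff₀ ((norm_nonneg _).trans_lt hs)])
  exact ⟨T * v, by rw [mul_pow, hv, mul_div_cancel₀ _ hT]⟩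

theorem natCast_eq_pow_mul_ordCompl (m : ℕ) :
    (m : ℚ_[p]) = (p : ℚ_[p]) ^ m.factorization p * (ordCompl[p] m : ℕ) := by
  exact_mod_cast (Nat.ordProj_mul_ordCompl_eq_self m p).symm

theorem norm_ordCompl {m : ℕ} (hm : m ≠ 0) : ‖((ordCompl[p] m : ℕ) : ℚ_[p])‖ = 1 :=
  norm_natCast_eq_one_iff.2 <| (Nat.Prime.coprime_iff_not_dvd Fact.out).2 <|
    Nat.not_dvd_ordCompl Fact.out hm

theorem norm_natCast_eq_pow_factorization {m : ℕ} (hm : m ≠ 0) :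
    ‖(m : ℚ_[p])‖ = ‖(p : ℚ_[p])‖ ^ m.factorization p := by
  rw [natCast_eq_pow_mul_ordCompl m, norm_mul, norm_pow, norm_ordCompl hm, mul_one]

theorem norm_natCast_sub_le_of_modEq {K u v : ℕ} (h : u ≡ v [MOD p ^ K]) :
    ‖(u : ℚ_[p]) - v‖ ≤ ‖(p : ℚ_[p])‖ ^ K := by
  obtain ⟨k, hk⟩ := (Nat.modEq_iff_dvd.1 h.symm)
  have : (u : ℚ_[p]) - v = (p : ℚ_[p]) ^ K * k := by exact_mod_cast hk
  rw [this, norm_mul, norm_pow]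
  exact mul_le_of_le_one_right (by positivity) (norm_int_le_one k)

theorem norm_natCast_sub_zpow_mul_le {K m m' : ℕ} (hm : m ≠ 0)
    (h : ordCompl[p] m ≡ ordCompl[p] m' [MOD p ^ K]) :
    ‖(m : ℚ_[p]) - (p : ℚ_[p]) ^ ((m.factorization p : ℤ) - m'.factorization p) * m'‖ ≤
      ‖(p : ℚ_[p])‖ ^ K * ‖(m : ℚ_[p])‖ := by
  have hp : (p : ℚ_[p]) ≠ 0 := by exact_mod_cast (Fact.out : p.Prime).ne_zero
  have : (m : ℚ_[p]) - (p : ℚ_[p]) ^ ((m.factorization p : ℤ) - m'.factorization p) * m' =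
      (p : ℚ_[p]) ^ m.factorization p * ((ordCompl[p] m : ℕ) - (ordCompl[p] m' : ℕ)) := by
    rw [natCast_eq_pow_mul_ordCompl m, natCast_eq_pow_mul_ordCompl m', zpow_sub₀ hp,
      zpow_natCast, zpow_natCast]
    field_simp
  rw [this, norm_mul, norm_natCast_eq_pow_factorization hm, mul_comm, norm_pow]
  exact mul_le_mul_of_nonneg_right (norm_natCast_sub_le_of_modEq h) (by positivity)

theorem norm_natCast_le_pow_mul_of_modEq {L x y : ℕ} (hx : x ≠ 0) (hy : y ≠ 0)
    (hv : x.factorization p ≡ y.factorization p [MOD L])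
    (hlt : x.factorization p < y.factorization p) :
    ‖(y : ℚ_[p])‖ ≤ ‖(p : ℚ_[p])‖ ^ L * ‖(x : ℚ_[p])‖ := by
  have hL : L ≤ y.factorization p - x.factorization p :=
    Nat.le_of_dvd (Nat.sub_pos_of_lt hlt) ((Nat.modEq_iff_dvd' hlt.le).1 hv)
  rw [norm_natCast_eq_pow_factorization hx, norm_natCast_eq_pow_factorization hy, ← pow_add]
  exact pow_le_pow_of_le_one (norm_nonneg _) norm_p_lt_one.le (by omega)

theorem factorization_eq_of_padicColor_eq {L K x y : ℕ} (hx : x ≠ 0) (hy : y ≠ 0)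
    (hcol : padicColor p L K x = padicColor p L K y) {a b : ℚ_[p]} {r : ℝ}
    (hLa : ‖(p : ℚ_[p])‖ ^ L * ‖b‖ < r * ‖a‖) (hLb : ‖(p : ℚ_[p])‖ ^ L * ‖a‖ < r * ‖b‖)
    (hxy : r * ‖a * x‖ ≤ ‖b * y‖) (hyx : r * ‖b * y‖ ≤ ‖a * x‖) :
    x.factorization p = y.factorization p := by
  have hv := (padicColor_eq_iff.1 hcol).1
  have hxpos : 0 < ‖(x : ℚ_[p])‖ := norm_pos_iff.2 (Nat.cast_ne_zero.2 hx)
  have hypos : 0 < ‖(y : ℚ_[p])‖ := norm_pos_iff.2 (Nat.cast_ne_zero.2 hy)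
  rw [norm_mul, norm_mul] at hxy hyx
  rcases lt_trichotomy (x.factorization p) (y.factorization p) with hlt | heq | hgt
  · have := norm_natCast_le_pow_mul_of_modEq hx hy hv hlt
    nlinarith [norm_nonneg b]
  · exact heq
  · have := norm_natCast_le_pow_mul_of_modEq hy hx hv.symm hgt
    nlinarith [norm_nonneg a]

theorem exists_pow_eq_div_of_padicColor_eq {n L K : ℕ} (hnL : n ∣ L)
    (hK : ‖(p : ℚ_[p])‖ ^ K < ‖(n : ℚ_[p])‖ ^ 2) {s c : ℚ_[p]} (hc : c ≠ 0) {w x z : ℕ}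
    (hw : w ≠ 0) (hx : x ≠ 0) (hz : z ≠ 0) (hcol : padicColor p L K w = padicColor p L K x)
    (h : ‖s * x - c * w * z ^ n‖ < ‖(n : ℚ_[p])‖ ^ 2 * ‖s * x‖) :
    ∃ t : ℚ_[p], t ^ n = s / c := by
  obtain ⟨hv, hu⟩ := padicColor_eq_iff.1 hcol
  obtain ⟨k, hk⟩ : (n : ℤ) ∣ (w.factorization p : ℤ) - x.factorization p :=
    (Int.natCast_dvd_natCast.2 hnL).trans hv.symm.dvd
  set T := (p : ℚ_[p]) ^ k * z
  have hpow :
      T ^ n * x = (p : ℚ_[p]) ^ ((w.factorization p : ℤ) - x.factorization p) * x * z ^ n := by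
    rw [hk, mul_pow, ← zpow_natCast ((p : ℚ_[p]) ^ k), ← zpow_mul, mul_comm k]
    ring
  have hcwz : c * w * z ^ n ≠ 0 := by simp [hc, hw, hz]
  have hclose : ‖c * w * z ^ n - c * T ^ n * x‖ < ‖(n : ℚ_[p])‖ ^ 2 * ‖c * w * z ^ n‖ := by
    calc ‖c * w * z ^ n - c * T ^ n * x‖
        = ‖c * z ^ n‖ *
            ‖(w : ℚ_[p]) - (p : ℚ_[p]) ^ ((w.factorization p : ℤ) - x.factorization p) * x‖ := by
          rw [← norm_mul, mul_assoc c (T ^ n), hpow]; congr 1; ring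
      _ ≤ ‖c * z ^ n‖ * (‖(p : ℚ_[p])‖ ^ K * ‖(w : ℚ_[p])‖) :=
          mul_le_mul_of_nonneg_left (norm_natCast_sub_zpow_mul_le hw hu) (norm_nonneg _)
      _ = ‖(p : ℚ_[p])‖ ^ K * ‖c * w * z ^ n‖ := by simp only [norm_mul]; ring
      _ < ‖(n : ℚ_[p])‖ ^ 2 * ‖c * w * z ^ n‖ := mul_lt_mul_of_pos_right hK (norm_pos_iff.2 hcwz)
  have hsT := norm_sub_lt_mul_of_norm_sub_lt_mul (norm_natCast_sq_le_one n) h hclose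
  have hcx : c * x ≠ 0 := by simp [hc, hx]
  refine exists_pow_eq_of_norm_sub_pow_lt (T := T) ?_
  rwa [show s / c - T ^ n = (s * x - c * T ^ n * x) / (c * x) by field_simp,
    show s / c = s * x / (c * x) by field_simp, norm_div, norm_div, ← mul_div_assoc,
    div_lt_div_iff_of_pos_right (norm_pos_iff.2 hcx)]

theorem exists_pow_eq_div_of_monochromatic {n L K : ℕ} (hnL : n ∣ L) {a b c : ℚ_[p]} (hc : c ≠ 0)
    (hK : ‖(p : ℚ_[p])‖ ^ K < ‖(n : ℚ_[p])‖ ^ 2)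
    (hKb : ‖(p : ℚ_[p])‖ ^ K * ‖b‖ < ‖(n : ℚ_[p])‖ ^ 2 * ‖a + b‖)
    (hLa : ‖(p : ℚ_[p])‖ ^ L * ‖b‖ < ‖(n : ℚ_[p])‖ ^ 2 * ‖a‖)
    (hLb : ‖(p : ℚ_[p])‖ ^ L * ‖a‖ < ‖(n : ℚ_[p])‖ ^ 2 * ‖b‖)
    {w x y z : ℕ} (hw : w ≠ 0) (hx : x ≠ 0) (hy : y ≠ 0) (hz : z ≠ 0)
    (hwx : padicColor p L K w = padicColor p L K x) (hxy : padicColor p L K x = padicColor p L K y)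
    (heq : a * x + b * y = c * w * z ^ n) :
    (∃ t : ℚ_[p], t ^ n = a / c) ∨ (∃ t : ℚ_[p], t ^ n = b / c) ∨
      (∃ t : ℚ_[p], t ^ n = (a + b) / c) := by
  by_cases h₁ : ‖b * y‖ < ‖(n : ℚ_[p])‖ ^ 2 * ‖a * x‖
  · refine .inl (exists_pow_eq_div_of_padicColor_eq hnL hK hc hw hx hz hwx ?_)
    rwa [← heq, sub_add_cancel_left, norm_neg]
  by_cases h₂ : ‖a * x‖ < ‖(n : ℚ_[p])‖ ^ 2 * ‖b * y‖
  · refine .inr (.inl (exists_pow_eq_div_of_padicColor_eq hnL hK hc hw hy hz (hwx.trans hxy) ?_))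
    rwa [← heq, sub_add_cancel_right, norm_neg]
  have hfac := factorization_eq_of_padicColor_eq hx hy hxy hLa hLb (not_lt.1 h₁) (not_lt.1 h₂)
  have hxy_close : ‖(x : ℚ_[p]) - y‖ ≤ ‖(p : ℚ_[p])‖ ^ K * ‖(x : ℚ_[p])‖ := by
    simpa [hfac] using norm_natCast_sub_zpow_mul_le hx (padicColor_eq_iff.1 hxy).2
  have hxpos : 0 < ‖(x : ℚ_[p])‖ := norm_pos_iff.2 (Nat.cast_ne_zero.2 hx)
  refine .inr (.inr (exists_pow_eq_div_of_padicColor_eq hnL hK hc hw hx hz hwx ?_))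
  calc ‖(a + b) * x - c * w * z ^ n‖ = ‖b‖ * ‖(x : ℚ_[p]) - y‖ := by
        rw [← heq, ← norm_mul]; congr 1; ring
    _ ≤ ‖b‖ * (‖(p : ℚ_[p])‖ ^ K * ‖(x : ℚ_[p])‖) :=
        mul_le_mul_of_nonneg_left hxy_close (norm_nonneg _)
    _ < ‖(n : ℚ_[p])‖ ^ 2 * ‖(a + b) * x‖ := by
        rw [norm_mul]; nlinarith

theorem exists_padicColor_forcing_pow {n : ℕ} (hn : 0 < n) {a b c : ℚ_[p]} (ha : a ≠ 0)
    (hb : b ≠ 0) (hab : a + b ≠ 0) (hc : c ≠ 0) :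
    ∃ L K : ℕ, 0 < L ∧ ∀ {w x y z : ℕ}, w ≠ 0 → x ≠ 0 → y ≠ 0 → z ≠ 0 →
      padicColor p L K w = padicColor p L K x → padicColor p L K x = padicColor p L K y →
      a * x + b * y = c * w * z ^ n →
      (∃ t : ℚ_[p], t ^ n = a / c) ∨ (∃ t : ℚ_[p], t ^ n = b / c) ∨
        (∃ t : ℚ_[p], t ^ n = (a + b) / c) := by
  have hr : 0 < ‖(n : ℚ_[p])‖ ^ 2 := by
    have : (n : ℚ_[p]) ≠ 0 := Nat.cast_ne_zero.2 hn.ne'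
    positivity
  have hsmall (C : ℝ) {ε : ℝ} (hε : 0 < ε) : ∀ᶠ M in atTop, ‖(p : ℚ_[p])‖ ^ M * C < ε := by
    have := (tendsto_pow_atTop_nhds_zero_of_lt_one (norm_nonneg _)
      (norm_p_lt_one (p := p))).mul_const C
    rw [zero_mul] at this
    exact this.eventually (gt_mem_nhds hε)
  obtain ⟨N, hN⟩ := eventually_atTop.1 <| (hsmall 1 hr).and <|
    (hsmall ‖b‖ (mul_pos hr (norm_pos_iff.2 hab))).and <|
    (hsmall ‖b‖ (mul_pos hr (norm_pos_iff.2 ha))).and (hsmall ‖a‖ (mul_pos hr (norm_pos_iff.2 hb)))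
  obtain ⟨hK, hKb, -, -⟩ := hN N le_rfl
  obtain ⟨-, -, hLa, hLb⟩ := hN (n * (N + 1)) (by nlinarith)
  refine ⟨n * (N + 1), N, by positivity, fun hw hx hy hz hwx hxy heq => ?_⟩
  exact exists_pow_eq_div_of_monochromatic (dvd_mul_right n _) hc (by simpa using hK) hKb hLa hLb
    hw hx hy hz hwx hxy heq

end Padic

theorem stmt_13_general (a b c : ℤ) (ha : a ≠ 0) (hb : b ≠ 0) (hc : c ≠ 0) (n : ℕ) (hn : 0 < n)
    (hPR : ∀ (r : ℕ) (C : ℕ → Fin r), ∃ w x y z : ℕ,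
      0 < w ∧ 0 < x ∧ 0 < y ∧ 0 < z ∧
      C w = C x ∧ C x = C y ∧ C y = C z ∧
      a * (x : ℤ) + b * (y : ℤ) = c * (w : ℤ) * (z : ℤ) ^ n)
    (p : ℕ) [Fact p.Prime] :
    (∃ t : ℚ_[p], t ^ n = (a : ℚ_[p]) / (c : ℚ_[p])) ∨
    (∃ t : ℚ_[p], t ^ n = (b : ℚ_[p]) / (c : ℚ_[p])) ∨
    (∃ t : ℚ_[p], t ^ n = ((a : ℚ_[p]) + (b : ℚ_[p])) / (c : ℚ_[p])) := by
  by_cases hab : (a : ℚ_[p]) + b = 0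
  · exact .inr (.inr ⟨0, by rw [hab, zero_div, zero_pow hn.ne']⟩)
  obtain ⟨L, K, hL, hforces⟩ := Padic.exists_padicColor_forcing_pow (p := p) hn (Int.cast_ne_zero.2 ha)
    (Int.cast_ne_zero.2 hb) hab (Int.cast_ne_zero.2 hc)
  have : NeZero L := ⟨hL.ne'⟩
  obtain ⟨w, x, y, z, hw, hx, hy, hz, hwx, hxy, -, heq⟩ :=
    hPR _ (Fintype.equivFin _ ∘ padicColor p L K)
  simp only [Function.comp_apply, Equiv.apply_eq_iff_eq] at hwx hxy
  exact hforces hw.ne' hx.ne' hy.ne' hz.ne' hwx hxy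
    (by exact_mod_cast congrArg (Int.cast : ℤ → ℚ_[p]) heq)

/-- If `a*x + b*y = c*w*z^n` is partition regular over the positive integers and `p` is a
prime such that `v_p((a+b)/c)` is neither `0` nor a positive multiple of `n`, then one of
`a/c, b/c, (a+b)/c` is an `n`-th power in `ℚ_p`. -/
theorem stmt_13 (a b c : ℤ) (ha : a ≠ 0) (hb : b ≠ 0) (hc : c ≠ 0) (n : ℕ) (hn : 0 < n)
    (hPR : ∀ (r : ℕ) (C : ℕ → Fin r), ∃ w x y z : ℕ,
      0 < w ∧ 0 < x ∧ 0 < y ∧ 0 < z ∧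
      C w = C x ∧ C x = C y ∧ C y = C z ∧
      a * (x : ℤ) + b * (y : ℤ) = c * (w : ℤ) * (z : ℤ) ^ n)
    (p : ℕ) [Fact p.Prime]
    (hv0 : padicValRat p (((a : ℚ) + (b : ℚ)) / (c : ℚ)) ≠ 0)
    (hvn : ∀ m : ℕ, 0 < m → padicValRat p (((a : ℚ) + (b : ℚ)) / (c : ℚ)) ≠ (n : ℤ) * m) :
    (∃ t : ℚ_[p], t ^ n = (a : ℚ_[p]) / (c : ℚ_[p])) ∨
    (∃ t : ℚ_[p], t ^ n = (b : ℚ_[p]) / (c : ℚ_[p])) ∨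
    (∃ t : ℚ_[p], t ^ n = ((a : ℚ_[p]) + (b : ℚ_[p])) / (c : ℚ_[p])) :=
  stmt_13_general a b c ha hb hc n hn hPR p
end

section
/- Let a, c be nonzero integers and n a positive natural number. The equation a·x = c·w·z^n (in the variables w, x, z) is partition regular over ℚ \ {0} if and only if a/c is an n-th power of a rational number. -/
/-!
A monochromatic solution gives `a/c = (w/x)·z^n` with `w, x` of the same colour. Colouring by
`v_p mod n` forces `n ∣ v_p(a/c)` for every prime `p`, and, for even `n`, colouring by sign forces
`a/c > 0`; a nonzero rational with both properties is an `n`-th power. Conversely, if `q^n = a/c`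
then `w = x = z = q` is a solution of a single colour.
-/

theorem Nat.floorRoot_pow_of_dvd_factorization {n m : ℕ} (hn : n ≠ 0)
    (h : ∀ p, n ∣ m.factorization p) : Nat.floorRoot n m ^ n = m := by
  rcases eq_or_ne m 0 with rfl | hm
  · simp [hn]
  refine Nat.eq_of_factorization_eq (pow_ne_zero _ (Nat.floorRoot_ne_zero.2 ⟨hn, hm⟩)) hm
    fun p => ?_
  rw [Nat.factorization_pow, Finsupp.smul_apply, Nat.factorization_floorRoot,
    Finsupp.floorDiv_apply, smul_eq_mul, Nat.floorDiv_eq_div, Nat.mul_div_cancel' (h p)]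

theorem Rat.exists_pow_eq_of_pos_of_dvd_padicValRat {n : ℕ} (hn : n ≠ 0) {r : ℚ} (hr : 0 < r)
    (h : ∀ p, p.Prime → (n : ℤ) ∣ padicValRat p r) : ∃ q : ℚ, q ^ n = r := by
  obtain ⟨k, rfl⟩ := Nat.exists_eq_succ_of_ne_zero hn
  -- `m = r·den^n` is a natural number whose valuations are all divisible by `n`
  set m : ℕ := r.num.natAbs * r.den ^ k
  have hm : (m : ℚ) = r * r.den ^ (k + 1) := by
    rw [pow_succ, ← mul_assoc, mul_comm r, mul_assoc, Rat.mul_den_eq_num]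
    simp [m, hr.le, mul_comm]
  have hdvd : ∀ p, k + 1 ∣ m.factorization p := by
    intro p
    by_cases hp : p.Prime
    · have := Fact.mk hp
      have hval : (m.factorization p : ℤ) =
          padicValRat p r + (k + 1 : ℕ) * padicValRat p r.den := by
        rw [Nat.factorization_def _ hp, padicValRat_of_nat, hm,
          padicValRat.mul hr.ne' (by positivity), padicValRat.pow]
      exact Int.natCast_dvd_natCast.1 (hval ▸ dvd_add (h p hp) (dvd_mul_right _ _))
    · simp [Nat.factorization_eq_zero_of_not_prime _ hp]
  refine ⟨Nat.floorRoot (k + 1) m / r.den, ?_⟩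
  rw [div_pow, ← Nat.cast_pow, Nat.floorRoot_pow_of_dvd_factorization hn hdvd, hm]
  field_simp

theorem Rat.exists_pow_eq_of_dvd_padicValRat {n : ℕ} (hn : n ≠ 0) {r : ℚ} (hr : r ≠ 0)
    (hsign : Even n → 0 < r) (h : ∀ p, p.Prime → (n : ℤ) ∣ padicValRat p r) :
    ∃ q : ℚ, q ^ n = r := by
  rcases hr.lt_or_gt with hneg | hpos
  · have hodd : Odd n := Nat.not_even_iff_odd.1 fun he => (hsign he).not_gt hneg
    obtain ⟨q, hq⟩ := exists_pow_eq_of_pos_of_dvd_padicValRat hn (neg_pos.2 hneg)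
      fun p hp => padicValRat.neg r ▸ h p hp
    exact ⟨-q, by rw [hodd.neg_pow, hq, neg_neg]⟩
  · exact exists_pow_eq_of_pos_of_dvd_padicValRat hn hpos h

def PartitionRegularMulPow (a c : ℚ) (n : ℕ) : Prop :=
  ∀ (r : ℕ) (C : ℚ → Fin r), ∃ w x z : ℚ,
    w ≠ 0 ∧ x ≠ 0 ∧ z ≠ 0 ∧ C w = C x ∧ C x = C z ∧ a * x = c * w * z ^ n

namespace PartitionRegularMulPow

variable {a c : ℚ} {n : ℕ}

theorem exists_div_mul_pow (H : PartitionRegularMulPow a c n) (hc : c ≠ 0) {α : Type*}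
    [Finite α] (f : ℚ → α) :
    ∃ w x z : ℚ, w ≠ 0 ∧ x ≠ 0 ∧ z ≠ 0 ∧ f w = f x ∧ a / c = w / x * z ^ n := by
  obtain ⟨k, ⟨e⟩⟩ := Finite.exists_equiv_fin α
  obtain ⟨w, x, z, hw, hx, hz, hwx, -, heq⟩ := H k (e ∘ f)
  refine ⟨w, x, z, hw, hx, hz, e.injective hwx, ?_⟩
  rw [div_mul_eq_mul_div, div_eq_div_iff hc hx]
  linear_combination heq

theorem dvd_padicValRat (H : PartitionRegularMulPow a c n) (hc : c ≠ 0) (hn : n ≠ 0) {p : ℕ}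
    (hp : p.Prime) : (n : ℤ) ∣ padicValRat p (a / c) := by
  have := Fact.mk hp
  have : NeZero n := ⟨hn⟩
  obtain ⟨w, x, z, hw, hx, hz, hwx, hr⟩ :=
    H.exists_div_mul_pow hc fun q => (padicValRat p q : ZMod n)
  rw [← ZMod.intCast_zmod_eq_zero_iff_dvd, hr,
    padicValRat.mul (div_ne_zero hw hx) (pow_ne_zero _ hz), padicValRat.div hw hx,
    padicValRat.pow]
  push_cast
  rw [hwx, ZMod.natCast_self]
  ring

theorem div_pos_of_even (H : PartitionRegularMulPow a c n) (hc : c ≠ 0) (hn : Even n) :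
    0 < a / c := by
  obtain ⟨w, x, z, hw, hx, hz, hwx, hr⟩ := H.exists_div_mul_pow hc fun q => 0 < q
  have hquot : 0 < w / x := by
    rcases hw.lt_or_gt with hw' | hw'
    · exact div_pos_of_neg_of_neg hw' (hx.lt_of_le (not_lt.1 (hwx ▸ hw'.not_gt)))
    · exact div_pos hw' (hwx ▸ hw')
  rw [hr]
  exact mul_pos hquot (hn.pow_pos hz)

end PartitionRegularMulPow

/-- The equation `a*x = c*w*z^n` is partition regular over `ℚ \ {0}` if and only if `a/c`
is an `n`-th power of a rational number. -/
theorem stmt_14 (a c : ℤ) (ha : a ≠ 0) (hc : c ≠ 0) (n : ℕ) (hn : 0 < n) :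
    (∀ (r : ℕ) (C : ℚ → Fin r), ∃ w x z : ℚ,
      w ≠ 0 ∧ x ≠ 0 ∧ z ≠ 0 ∧
      C w = C x ∧ C x = C z ∧
      (a : ℚ) * x = (c : ℚ) * w * z ^ n) ↔ ∃ q : ℚ, q ^ n = (a : ℚ) / (c : ℚ) := by
  have hc' : (c : ℚ) ≠ 0 := Int.cast_ne_zero.2 hc
  have hac : (a : ℚ) / c ≠ 0 := div_ne_zero (Int.cast_ne_zero.2 ha) hc'
  constructor
  · intro H
    exact Rat.exists_pow_eq_of_dvd_padicValRat hn.ne' hac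
      (PartitionRegularMulPow.div_pos_of_even H hc')
      fun _ hp => PartitionRegularMulPow.dvd_padicValRat H hc' hn.ne' hp
  · rintro ⟨q, hq⟩ r C
    have hq0 : q ≠ 0 := by
      rintro rfl
      rw [zero_pow hn.ne'] at hq
      exact hac hq.symm
    refine ⟨q, q, q, hq0, hq0, hq0, rfl, rfl, ?_⟩
    rw [hq]
    field_simp
end

section
/- There exists an ultrafilter p on ℕ (the positive integers) with the following three properties: (i) for every A ∈ p and every ℓ ∈ ℕ there exist b, g ∈ A such that b·g^j ∈ A for all 0 ≤ j ≤ ℓ; (ii) for every A ∈ p and all h, ℓ ∈ ℕ there exist a, d ∈ ℕ such that h·d ∈ A and h·a + i·d ∈ A for every integer i with −ℓ ≤ i ≤ ℓ; (iii) for every s ∈ ℕ, the set s·ℕ = {s·k : k ∈ ℕ} belongs to p. -/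
attribute [local instance] Ultrafilter.mul Ultrafilter.semigroup

open Filter Set

namespace GeoArith

abbrev M := ℕ+

/-- Multiplicative thickness. -/
def Thick (T : Set M) : Prop := ∀ F : Finset M, ∃ z : M, ∀ f ∈ F, f * z ∈ T

/-- Multiplicative piecewise syndeticity. -/
def PS (A : Set M) : Prop :=
  ∃ G : Finset M, G.Nonempty ∧ ∀ F : Finset M, ∃ z : M, ∀ f ∈ F, ∃ t ∈ G, t * (f * z) ∈ A

lemma PS.mono {A B : Set M} (hAB : A ⊆ B) (h : PS A) : PS B := by
  obtain ⟨G, hG, hth⟩ := h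
  refine ⟨G, hG, fun F => ?_⟩
  obtain ⟨z, hz⟩ := hth F
  exact ⟨z, fun f hf => by obtain ⟨t, ht, hta⟩ := hz f hf; exact ⟨t, ht, hAB hta⟩⟩

lemma Thick.ps {T : Set M} (h : Thick T) : PS T := by
  refine ⟨{1}, ⟨1, Finset.mem_singleton_self 1⟩, fun F => ?_⟩
  obtain ⟨z, hz⟩ := h F
  exact ⟨z, fun f hf => ⟨1, Finset.mem_singleton_self 1, by simpa using hz f hf⟩⟩

lemma not_ps_empty : ¬ PS (∅ : Set M) := by
  rintro ⟨G, hG, hth⟩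
  obtain ⟨z, hz⟩ := hth {1}
  obtain ⟨t, _, hta⟩ := hz 1 (Finset.mem_singleton_self 1)
  exact hta

open Pointwise in
lemma ps_union {A B : Set M} (h : PS (A ∪ B)) (hA : ¬ PS A) : PS B := by
  obtain ⟨G, hGne, hth⟩ := h
  have h1 : ¬ ∀ F : Finset M, ∃ z : M, ∀ f ∈ F, ∃ t ∈ G, t * (f * z) ∈ A :=
    fun hcon => hA ⟨G, hGne, hcon⟩
  push_neg at h1
  obtain ⟨F₀, hF₀⟩ := h1
  have hF₀ne : F₀.Nonempty := by
    obtain ⟨f, hf, -⟩ := hF₀ 1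
    exact ⟨f, hf⟩
  refine ⟨G * F₀, hGne.mul hF₀ne, fun F => ?_⟩
  obtain ⟨z₁, hz₁⟩ := hth (F₀ * F)
  refine ⟨z₁, fun f hf => ?_⟩
  obtain ⟨f₀, hf₀, hfb⟩ := hF₀ (f * z₁)
  obtain ⟨t, ht, hta⟩ := hz₁ (f₀ * f) (Finset.mul_mem_mul hf₀ hf)
  have heq : t * (f₀ * f * z₁) = t * (f₀ * (f * z₁)) := by
    apply PNat.coe_injective; push_cast; ring
  rw [heq] at hta
  rcases hta with hta | hta
  · exact absurd hta (hfb t ht)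
  · refine ⟨t * f₀, Finset.mul_mem_mul ht hf₀, ?_⟩
    have heq2 : t * f₀ * (f * z₁) = t * (f₀ * (f * z₁)) := by
      apply PNat.coe_injective; push_cast; ring
    rwa [heq2]

lemma ps_finUnion {𝒜 : Finset (Set M)} (h : PS (⋃₀ ↑𝒜)) : ∃ A ∈ 𝒜, PS A := by
  classical
  induction 𝒜 using Finset.induction with
  | empty => simp only [Finset.coe_empty, Set.sUnion_empty] at h; exact absurd h not_ps_empty
  | @insert A 𝒜 hA ih =>
      rw [Finset.coe_insert, Set.sUnion_insert] at h
      by_cases hPA : PS A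
      · exact ⟨A, Finset.mem_insert_self _ _, hPA⟩
      · obtain ⟨B, hB, hPB⟩ := ih (ps_union h hPA)
        exact ⟨B, Finset.mem_insert_of_mem hB, hPB⟩

/-- The set of multiples of `s` is thick. -/
lemma divSet_thick (s : M) : Thick {k : M | (s : ℕ) ∣ (k : ℕ)} := by
  intro F
  refine ⟨s, fun f _ => ?_⟩
  show (s : ℕ) ∣ ((f * s : M) : ℕ)
  exact ⟨(f : ℕ), by push_cast; ring⟩

lemma key_nonempty (s : M) (𝒜 : Finset (Set M)) (h𝒜 : ∀ A ∈ 𝒜, ¬ PS A) :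
    ({k : M | (s : ℕ) ∣ (k : ℕ)} \ ⋃₀ ↑𝒜).Nonempty := by
  rw [Set.nonempty_iff_ne_empty]
  intro hemp
  rw [Set.diff_eq_empty] at hemp
  obtain ⟨A, hA, hPA⟩ := ps_finUnion ((divSet_thick s).ps.mono hemp)
  exact h𝒜 A hA hPA

/-- The generating family: divisibility sets and complements of non-PS sets. -/
def gen : Set (Set M) :=
  {S | ∃ s : M, S = {k : M | (s : ℕ) ∣ (k : ℕ)}} ∪ {S | ∃ A : Set M, ¬ PS A ∧ S = Aᶜ}

lemma gen_aux (u : Finset (Set M)) : ↑u ⊆ gen →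
    ∃ (s : M) (𝒜 : Finset (Set M)), (∀ A ∈ 𝒜, ¬ PS A) ∧
      {k : M | (s : ℕ) ∣ (k : ℕ)} \ ⋃₀ ↑𝒜 ⊆ ⋂₀ (↑u : Set (Set M)) := by
  classical
  induction u using Finset.induction with
  | empty => intro _; exact ⟨1, ∅, by simp, by simp⟩
  | @insert S u hS ih =>
      intro ht
      obtain ⟨s, 𝒜, h𝒜, hsub⟩ := ih (fun x hx => ht (by simp [hx]))
      have hSgen : S ∈ gen := ht (by simp)
      rcases hSgen with ⟨s', hs'⟩ | ⟨A, hPA, hA⟩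
      · refine ⟨s * s', 𝒜, h𝒜, ?_⟩
        intro x hx
        obtain ⟨hx1, hx2⟩ := hx
        rw [Finset.coe_insert, Set.sInter_insert]
        have hdvd : ((s : ℕ) * (s' : ℕ)) ∣ (x : ℕ) := by
          have h' : ((s * s' : M) : ℕ) ∣ (x : ℕ) := hx1
          push_cast at h'
          exact h'
        constructor
        · rw [hs']
          exact dvd_trans ⟨(s : ℕ), mul_comm _ _⟩ hdvd
        · exact hsub ⟨dvd_trans ⟨(s' : ℕ), rfl⟩ hdvd, hx2⟩
      · refine ⟨s, insert A 𝒜, ?_, ?_⟩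
        · intro B hB
          rcases Finset.mem_insert.mp hB with rfl | hB
          · exact hPA
          · exact h𝒜 B hB
        · intro x hx
          obtain ⟨hx1, hx2⟩ := hx
          rw [Finset.coe_insert, Set.sUnion_insert, Set.mem_union] at hx2
          rw [Finset.coe_insert, Set.sInter_insert]
          push_neg at hx2
          refine ⟨?_, hsub ⟨hx1, hx2.2⟩⟩
          rw [hA]
          exact hx2.1

lemma gen_inter_nonempty (t : Set (Set M)) (ht : t ⊆ gen) (hfin : t.Finite) :
    (⋂₀ t).Nonempty := by
  obtain ⟨u, rfl⟩ : ∃ u : Finset (Set M), ↑u = t := ⟨hfin.toFinset, hfin.coe_toFinset⟩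
  obtain ⟨s, 𝒜, h𝒜, hsub⟩ := gen_aux u ht
  exact (key_nonempty s 𝒜 h𝒜).mono hsub

/-- An ultrafilter all of whose members are PS, containing all divisibility sets. -/
lemma exists_ps_ultrafilter : ∃ p : Ultrafilter M,
    (∀ A ∈ p, PS A) ∧ ∀ s : M, {k : M | (s : ℕ) ∣ (k : ℕ)} ∈ p := by
  have hne : (Filter.generate gen).NeBot :=
    Filter.generate_neBot_iff.mpr fun t ht htf => gen_inter_nonempty t ht htf
  obtain ⟨p, hp⟩ := Ultrafilter.exists_le (Filter.generate gen)
  refine ⟨p, fun A hA => ?_, fun s => hp (Filter.GenerateSets.basic (Or.inl ⟨s, rfl⟩))⟩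
  by_contra hPA
  have : Aᶜ ∈ p := hp (Filter.GenerateSets.basic (Or.inr ⟨A, hPA, rfl⟩))
  exact (Ultrafilter.compl_mem_iff_notMem.mp this) hA

/-- The good set of ultrafilters. -/
def Phi : Set (Ultrafilter M) :=
  {q | (∀ A ∈ q, PS A) ∧ ∀ s : M, {k : M | (s : ℕ) ∣ (k : ℕ)} ∈ q}

lemma mem_mul_ultra {q r : Ultrafilter M} {s : Set M} :
    s ∈ q * r ↔ {m : M | {m' : M | m * m' ∈ s} ∈ r} ∈ q := by
  have := Ultrafilter.eventually_mul q r (· ∈ s)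
  simpa [Filter.eventually_iff] using this

lemma Phi_closed : IsClosed Phi := by
  have hPhi : Phi = (⋂ (A : Set M) (_ : ¬ PS A), {q : Ultrafilter M | Aᶜ ∈ q}) ∩
      ⋂ s : M, {q : Ultrafilter M | {k : M | (s : ℕ) ∣ (k : ℕ)} ∈ q} := by
    ext q
    simp only [Phi, Set.mem_inter_iff, Set.mem_iInter, Set.mem_setOf_eq]
    constructor
    · rintro ⟨h1, h2⟩
      exact ⟨fun A hA => Ultrafilter.compl_mem_iff_notMem.mpr (fun hq => hA (h1 A hq)), h2⟩
    · rintro ⟨h1, h2⟩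
      refine ⟨fun A hA => ?_, h2⟩
      by_contra hPA
      exact (Ultrafilter.compl_mem_iff_notMem.mp (h1 A hPA)) hA
  rw [hPhi]
  exact ((isClosed_iInter fun A => isClosed_iInter fun _ => ultrafilter_isClosed_basic _).inter
    (isClosed_iInter fun s => ultrafilter_isClosed_basic _))

lemma Phi_mul {q r : Ultrafilter M} (hq : q ∈ Phi) (hr : r ∈ Phi) : q * r ∈ Phi := by
  constructor
  · intro A hA
    rw [mem_mul_ultra] at hA
    obtain ⟨G, hGne, hth⟩ := hq.1 _ hA
    refine ⟨G, hGne, fun F => ?_⟩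
    obtain ⟨z₀, hz₀⟩ := hth F
    classical
    choose tf htfG htfX using hz₀
    have hw : (⋂ (f : {x // x ∈ F}), {m' : M | tf f.1 f.2 * (f.1 * z₀) * m' ∈ A}) ∈ r := by
      refine Filter.iInter_mem.mpr fun f => ?_
      exact htfX f.1 f.2
    obtain ⟨m', hm'⟩ := Ultrafilter.nonempty_of_mem hw
    refine ⟨z₀ * m', fun f hf => ⟨tf f hf, htfG f hf, ?_⟩⟩
    have hthis : tf f hf * (f * z₀) * m' ∈ A := Set.mem_iInter.mp hm' ⟨f, hf⟩
    have heq : tf f hf * (f * z₀) * m' = tf f hf * (f * (z₀ * m')) := by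
      apply PNat.coe_injective; push_cast; ring
    rwa [heq] at hthis
  · intro s
    rw [mem_mul_ultra]
    have hs : {k : M | (s : ℕ) ∣ (k : ℕ)} ∈ r := hr.2 s
    refine Filter.mem_of_superset Filter.univ_mem fun m _ => ?_
    refine Filter.mem_of_superset hs fun m' hm' => ?_
    show (s : ℕ) ∣ ((m * m' : M) : ℕ)
    push_cast
    exact Dvd.dvd.mul_left hm' _

lemma exists_good_idem : ∃ p : Ultrafilter M, p ∈ Phi ∧ p * p = p := by
  obtain ⟨p₀, h1, h2⟩ := exists_ps_ultrafilter
  obtain ⟨p, hp, hidem⟩ := exists_idempotent_in_compact_subsemigroup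
    Ultrafilter.continuous_mul_left Phi ⟨p₀, h1, h2⟩ Phi_closed.isCompact
    (fun x hx y hy => Phi_mul hx hy)
  exact ⟨p, hp, hidem⟩

/-! ### Finite van der Waerden from Hales–Jewett -/

lemma finite_vdw (L : ℕ) (κ : Type) [Finite κ] :
    ∃ N : ℕ, 0 < N ∧ ∀ C : ℕ → κ, ∃ a d : ℕ, 0 < a ∧ 0 < d ∧ a + L * d ≤ N ∧
      ∀ k ≤ L, C (a + k * d) = C a := by
  classical
  obtain ⟨ι, ιfin, hHJ⟩ := Combinatorics.Line.exists_mono_in_high_dimension (Fin (L + 1)) κ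
  refine ⟨1 + L * Fintype.card ι, by omega, fun C => ?_⟩
  obtain ⟨l, c, hl⟩ := hHJ fun v => C (1 + ∑ i, (v i : ℕ))
  set s : Finset ι := Finset.univ.filter (fun i => l.idxFun i = none) with hs
  have hsne : s.Nonempty := by
    obtain ⟨i, hi⟩ := l.proper
    exact ⟨i, by simp [hs, hi]⟩
  set B : ℕ := ∑ i ∈ sᶜ, ((l.idxFun i).map Fin.val).getD 0 with hB
  have key : ∀ x : Fin (L + 1), (1 + ∑ i, ((l x i : Fin (L+1)) : ℕ))
      = (1 + B) + (x : ℕ) * s.card := by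
    intro x
    have hsplit : ∑ i, ((l x i : Fin (L+1)) : ℕ)
        = (∑ i ∈ s, ((l x i : Fin (L+1)) : ℕ)) + ∑ i ∈ sᶜ, ((l x i : Fin (L+1)) : ℕ) :=
      (Finset.sum_add_sum_compl s _).symm
    have h1 : ∑ i ∈ s, ((l x i : Fin (L+1)) : ℕ) = s.card * (x : ℕ) := by
      have hc : ∀ i ∈ s, ((l x i : Fin (L+1)) : ℕ) = (x : ℕ) := fun i hi => by
        rw [l.apply_none _ _ ((Finset.mem_filter.mp hi).2)]
      rw [Finset.sum_congr rfl hc, Finset.sum_const, smul_eq_mul]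
    have h2 : ∑ i ∈ sᶜ, ((l x i : Fin (L+1)) : ℕ) = B := by
      rw [hB]
      refine Finset.sum_congr rfl fun i hi => ?_
      have hne : l.idxFun i ≠ none := by
        simpa [hs] using (Finset.mem_compl.mp hi)
      obtain ⟨v, hv⟩ := Option.ne_none_iff_exists'.mp hne
      rw [Combinatorics.Line.coe_apply, hv]
      simp
    rw [hsplit, h1, h2]; ring
  refine ⟨1 + B, s.card, by omega, Finset.card_pos.mpr hsne, ?_, ?_⟩
  · have hBle : B ≤ L * sᶜ.card := by
      rw [hB]
      calc ∑ i ∈ sᶜ, ((l.idxFun i).map Fin.val).getD 0 ≤ ∑ _i ∈ sᶜ, L := by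
            refine Finset.sum_le_sum fun i _ => ?_
            cases h : l.idxFun i with
            | none => simp
            | some v => simpa using Fin.is_le v
        _ = sᶜ.card * L := by rw [Finset.sum_const, smul_eq_mul]
        _ = L * sᶜ.card := mul_comm _ _
    have hcards : s.card + sᶜ.card = Fintype.card ι := Finset.card_add_card_compl s
    calc 1 + B + L * s.card ≤ 1 + L * sᶜ.card + L * s.card := by omega
      _ = 1 + L * (s.card + sᶜ.card) := by ring
      _ = 1 + L * Fintype.card ι := by rw [hcards]
  · intro k hk
    have hcol : ∀ x : Fin (L+1), C ((1 + B) + (x : ℕ) * s.card) = c := by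
      intro x
      rw [← key x]
      exact hl x
    have hk0 := hcol 0
    simp only [Fin.val_zero, zero_mul, add_zero] at hk0
    rw [hk0]
    have hkk := hcol ⟨k, by omega⟩
    simpa using hkk

/-! ### A Brauer-type finite theorem -/

lemma brauer : ∀ (r : ℕ) (κ : Type) [Fintype κ], Fintype.card κ ≤ r →
    ∀ (m h : ℕ), 0 < h → ∃ N : ℕ, 0 < N ∧ ∀ C : ℕ → κ, ∃ α β : ℕ,
      0 < α ∧ 0 < β ∧ α + m * β ≤ N ∧ h * β ≤ N ∧ ∀ k ≤ m, C (α + k * β) = C (h * β) := by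
  intro r
  induction r with
  | zero =>
      intro κ _ hcard m h hh
      refine ⟨1, one_pos, fun C => ?_⟩
      have : IsEmpty κ := Fintype.card_eq_zero_iff.mp (Nat.le_zero.mp hcard)
      exact (this.false (C 0)).elim
  | succ r ih =>
      intro κ instK hcard m h hh
      classical
      obtain ⟨W, hWpos, hW⟩ := ih (Fin r) (by simp) m h hh
      obtain ⟨N₁, hN₁pos, hvdw⟩ := finite_vdw (m * W + 1) κ
      refine ⟨h * N₁ * W, Nat.mul_pos (Nat.mul_pos hh hN₁pos) hWpos, fun C => ?_⟩
      obtain ⟨a₀, d₀, ha₀, hd₀, hbound, hmono⟩ := hvdw C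
      set c₀ := C a₀ with hc₀
      have hd₀N : d₀ ≤ N₁ := by
        have h1 : d₀ ≤ (m * W + 1) * d₀ := Nat.le_mul_of_pos_left d₀ (by omega)
        omega
      by_cases hcase : ∃ j : ℕ, 1 ≤ j ∧ j ≤ W ∧ C (h * (d₀ * j)) = c₀
      · obtain ⟨j, hj1, hjW, hjc⟩ := hcase
        have hNle : N₁ ≤ h * N₁ * W := by
          have t1 : N₁ ≤ N₁ * W := Nat.le_mul_of_pos_right N₁ hWpos
          have t2 : N₁ * W ≤ h * (N₁ * W) := Nat.le_mul_of_pos_left _ hh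
          have t3 : h * (N₁ * W) = h * N₁ * W := by ring
          omega
        refine ⟨a₀, d₀ * j, ha₀, Nat.mul_pos hd₀ hj1, ?_, ?_, ?_⟩
        · have s1 : m * (d₀ * j) ≤ (m * W) * d₀ := by
            calc m * (d₀ * j) = (m * j) * d₀ := by ring
              _ ≤ (m * W) * d₀ := Nat.mul_le_mul_right d₀ (Nat.mul_le_mul_left m hjW)
          have hexp : (m * W + 1) * d₀ = (m * W) * d₀ + d₀ := by ring
          omega
        · have s1 : h * (d₀ * j) ≤ h * (N₁ * W) :=
            Nat.mul_le_mul_left h (Nat.mul_le_mul hd₀N hjW)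
          have s2 : h * (N₁ * W) = h * N₁ * W := by ring
          omega
        · intro k hk
          have h1 : C (a₀ + k * (d₀ * j)) = c₀ := by
            have harg : a₀ + k * (d₀ * j) = a₀ + (k * j) * d₀ := by ring
            rw [harg]
            refine hmono (k * j) ?_
            have : k * j ≤ m * W := Nat.mul_le_mul hk hjW
            omega
          rw [h1, hjc]
      · push_neg at hcase
        have hne : Nonempty {x : κ // x ≠ c₀} :=
          ⟨⟨C (h * (d₀ * 1)), hcase 1 le_rfl hWpos⟩⟩
        have hcard' : Fintype.card {x : κ // x ≠ c₀} ≤ r := by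
          have hlt : Fintype.card {x : κ // x ≠ c₀} < Fintype.card κ :=
            Fintype.card_subtype_lt (x := c₀) (by simp)
          omega
        obtain ⟨e⟩ : Nonempty ({x : κ // x ≠ c₀} ↪ Fin r) := by
          apply Function.Embedding.nonempty_of_card_le
          simpa using hcard'
        set C' : ℕ → {x : κ // x ≠ c₀} := fun j =>
          if hc : C (h * (d₀ * j)) = c₀ then Classical.arbitrary _ else ⟨_, hc⟩ with hC'
        obtain ⟨α', β', hα', hβ', hb1, hb2, hcol⟩ := hW (fun j => e (C' j))
        have hval : ∀ x : ℕ, 1 ≤ x → x ≤ W → ((C' x : κ)) = C (h * (d₀ * x)) := by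
          intro x h1 h2
          rw [hC']
          simp only
          rw [dif_neg (hcase x h1 h2)]
        have hkey : ∀ k ≤ m, C (h * (d₀ * (α' + k * β'))) = C (h * (d₀ * (h * β'))) := by
          intro k hk
          have hcc := hcol k hk
          have heq : C' (α' + k * β') = C' (h * β') := e.injective hcc
          have e1 : (C' (α' + k * β') : κ) = C (h * (d₀ * (α' + k * β'))) := by
            refine hval _ (hα'.trans_le (Nat.le_add_right _ _)) ?_
            have s1 : k * β' ≤ m * β' := Nat.mul_le_mul_right β' hk
            omega
          have e2 := hval (h * β') (Nat.mul_pos hh hβ') hb2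
          rw [← e1, ← e2, heq]
        refine ⟨h * (d₀ * α'), h * (d₀ * β'), Nat.mul_pos hh (Nat.mul_pos hd₀ hα'),
          Nat.mul_pos hh (Nat.mul_pos hd₀ hβ'), ?_, ?_, ?_⟩
        · calc h * (d₀ * α') + m * (h * (d₀ * β')) = h * d₀ * (α' + m * β') := by ring
            _ ≤ h * d₀ * W := Nat.mul_le_mul_left _ hb1
            _ ≤ h * N₁ * W := Nat.mul_le_mul_right _ (Nat.mul_le_mul_left _ hd₀N)
        · calc h * (h * (d₀ * β')) = h * d₀ * (h * β') := by ring
            _ ≤ h * d₀ * W := Nat.mul_le_mul_left _ hb2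
            _ ≤ h * N₁ * W := Nat.mul_le_mul_right _ (Nat.mul_le_mul_left _ hd₀N)
        · intro k hk
          have hk2 := hkey k hk
          have e1 : h * (d₀ * (α' + k * β')) = h * (d₀ * α') + k * (h * (d₀ * β')) := by ring
          have e2 : h * (d₀ * (h * β')) = h * (h * (d₀ * β')) := by ring
          rw [e1, e2] at hk2
          exact hk2

/-! ### The configurations inside members of the good ultrafilter -/

/-- helper: ℕ → ℕ+ -/
def pn (n : ℕ) : M := ⟨max 1 n, by omega⟩

lemma pn_coe {n : ℕ} (hn : 1 ≤ n) : ((pn n : M) : ℕ) = n := by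
  show max 1 n = n
  omega

/-- Configuration (i) in PS members of an idempotent ultrafilter. -/
lemma config_geo {p : Ultrafilter M} (hidem : p * p = p) (hPS : ∀ A ∈ p, PS A)
    {A : Set M} (hA : A ∈ p) (L : ℕ) :
    ∃ b ∈ A, ∃ g ∈ A, ∀ j : ℕ, j ≤ L → b * g ^ j ∈ A := by
  classical
  obtain ⟨G, hGne, hth⟩ := hPS A hA
  obtain ⟨a, hFP⟩ := Hindman.exists_FP_of_large p hidem A hA
  obtain ⟨ι, ιfin, hHJ⟩ :=
    Combinatorics.Line.exists_mono_in_high_dimension (Fin (L + 1)) {t // t ∈ G}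
  set eι := Fintype.equivFin ι with heι
  set y : ι → M := fun i => a.get (eι i) with hy
  set φ : (ι → Fin (L + 1)) → M := fun w => ∏ i, y i ^ ((w i : ℕ)) with hφ
  obtain ⟨z, hz⟩ := hth (Finset.univ.image φ)
  have hzw : ∀ w : ι → Fin (L + 1), ∃ t ∈ G, t * (φ w * z) ∈ A :=
    fun w => hz (φ w) (Finset.mem_image_of_mem φ (Finset.mem_univ w))
  choose tw htwG htwA using hzw
  obtain ⟨l, t₀, hl⟩ := hHJ fun w => (⟨tw w, htwG w⟩ : {t // t ∈ G})
  set s : Finset ι := Finset.univ.filter (fun i => l.idxFun i = none) with hs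
  have hsne : s.Nonempty := by
    obtain ⟨i, hi⟩ := l.proper
    exact ⟨i, by simp [hs, hi]⟩
  set g : M := ∏ i ∈ s, y i with hg
  set b₀ : M := ∏ i ∈ sᶜ, y i ^ (((l.idxFun i).getD 0 : Fin (L+1)) : ℕ) with hb₀
  have hgA : g ∈ A := by
    refine hFP ?_
    have hgeq : g = ∏ n ∈ s.image (fun i => (eι i : ℕ)), a.get n := by
      rw [hg, Finset.prod_image]
      intro i _ j _ hij
      exact eι.injective (Fin.val_injective hij)
    rw [hgeq]
    exact Hindman.FP.finset_prod a _ (hsne.image _)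
  have key : ∀ x : Fin (L + 1), φ (l x) = b₀ * g ^ (x : ℕ) := by
    intro x
    rw [hφ]
    simp only
    rw [← Finset.prod_mul_prod_compl s (fun i => y i ^ (((l x) i : ℕ)))]
    have h1 : (∏ i ∈ s, y i ^ (((l x) i : ℕ))) = g ^ (x : ℕ) := by
      rw [hg, ← Finset.prod_pow]
      refine Finset.prod_congr rfl fun i hi => ?_
      rw [l.apply_none _ _ ((Finset.mem_filter.mp hi).2)]
    have h2 : (∏ i ∈ sᶜ, y i ^ (((l x) i : ℕ))) = b₀ := by
      rw [hb₀]
      refine Finset.prod_congr rfl fun i hi => ?_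
      have hne : l.idxFun i ≠ none := by
        simpa [hs] using (Finset.mem_compl.mp hi)
      obtain ⟨v, hv⟩ := Option.ne_none_iff_exists'.mp hne
      rw [Combinatorics.Line.coe_apply, hv]
      simp
    rw [h1, h2, mul_comm]
  have key2 : ∀ j : ℕ, j ≤ L → ((t₀ : M) * b₀ * z) * g ^ j ∈ A := by
    intro j hj
    set x : Fin (L + 1) := ⟨j, by omega⟩ with hx
    have hcol := hl x
    have hteq : tw (l x) = (t₀ : M) := congrArg Subtype.val hcol
    have hmem := htwA (l x)
    rw [hteq, key x] at hmem
    have harr : (t₀ : M) * (b₀ * g ^ (x : ℕ) * z) = ((t₀ : M) * b₀ * z) * g ^ (x : ℕ) := by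
      apply PNat.coe_injective; push_cast; ring
    rw [harr] at hmem
    simpa [hx] using hmem
  refine ⟨(t₀ : M) * b₀ * z, ?_, g, hgA, key2⟩
  have hb := key2 0 (Nat.zero_le L)
  simpa using hb

/-- Configuration (ii) in PS members. -/
lemma config_ap {p : Ultrafilter M} (hPS : ∀ A ∈ p, PS A)
    {A : Set M} (hA : A ∈ p) (h ℓ : M) :
    ∃ a d : M, h * d ∈ A ∧ ∀ i : ℤ, -((ℓ : ℕ) : ℤ) ≤ i → i ≤ ((ℓ : ℕ) : ℤ) →
      ∃ m ∈ A, ((m : ℕ) : ℤ) = ((h : ℕ) : ℤ) * ((a : ℕ) : ℤ) + i * ((d : ℕ) : ℤ) := by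
  classical
  obtain ⟨G, hGne, hth⟩ := hPS A hA
  obtain ⟨N, hNpos, hFB⟩ := brauer (Fintype.card {t // t ∈ G}) {t // t ∈ G} le_rfl
    (2 * (ℓ : ℕ)) (h : ℕ) h.pos
  obtain ⟨z, hz⟩ := hth ((Finset.Icc 1 N).image fun i => pn i * h)
  have hzi : ∀ i ∈ Finset.Icc 1 N, ∃ t ∈ G, t * ((pn i * h) * z) ∈ A :=
    fun i hi => hz _ (Finset.mem_image_of_mem _ hi)
  choose ti htiG htiA using hzi
  set C : ℕ → {t // t ∈ G} := fun i =>
    if hi : i ∈ Finset.Icc 1 N then ⟨ti i hi, htiG i hi⟩ else ⟨hGne.choose, hGne.choose_spec⟩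
    with hC
  obtain ⟨α, β, hα, hβ, hb1, hb2, hcol⟩ := hFB C
  have hmemh : (h : ℕ) * β ∈ Finset.Icc 1 N :=
    Finset.mem_Icc.mpr ⟨Nat.mul_pos h.pos hβ, hb2⟩
  have hmemk : ∀ k, k ≤ 2 * (ℓ : ℕ) → α + k * β ∈ Finset.Icc 1 N := by
    intro k hk
    refine Finset.mem_Icc.mpr ⟨hα.trans_le (Nat.le_add_right _ _), ?_⟩
    calc α + k * β ≤ α + 2 * (ℓ : ℕ) * β := by
          exact Nat.add_le_add_left (Nat.mul_le_mul_right β hk) α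
      _ ≤ N := hb1
  set t₀ := C ((h : ℕ) * β) with ht₀
  have hEl : ∀ k, k ≤ 2 * (ℓ : ℕ) → (t₀ : M) * ((pn (α + k * β) * h) * z) ∈ A := by
    intro k hk
    have hmem := hmemk k hk
    have hCk : C (α + k * β) = ⟨ti _ hmem, htiG _ hmem⟩ := by
      simp only [hC]; rw [dif_pos hmem]
    have hval : (t₀ : M) = ti _ hmem := by
      have hcc : C (α + k * β) = t₀ := hcol k hk
      rw [← hcc, hCk]
    rw [hval]
    exact htiA _ hmem
  have hEh : (t₀ : M) * ((pn ((h : ℕ) * β) * h) * z) ∈ A := by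
    have hCh : C ((h : ℕ) * β) = ⟨ti _ hmemh, htiG _ hmemh⟩ := by
      simp only [hC]; rw [dif_pos hmemh]
    have hval : (t₀ : M) = ti _ hmemh := by rw [ht₀, hCh]
    rw [hval]
    exact htiA _ hmemh
  have hhβ : 1 ≤ (h : ℕ) * β := Nat.mul_pos h.pos hβ
  refine ⟨(t₀ : M) * pn (α + (ℓ : ℕ) * β) * z, (t₀ : M) * pn β * h * z, ?_, ?_⟩
  · have harr : h * ((t₀ : M) * pn β * h * z) = (t₀ : M) * ((pn ((h : ℕ) * β) * h) * z) := by
      apply PNat.coe_injective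
      push_cast [pn_coe hβ, pn_coe hhβ]
      ring
    rw [harr]
    exact hEh
  · intro i hi1 hi2
    set k : ℕ := (i + ((ℓ : ℕ) : ℤ)).toNat with hk
    have hkz : (k : ℤ) = i + ((ℓ : ℕ) : ℤ) := Int.toNat_of_nonneg (by omega)
    have hkle : k ≤ 2 * (ℓ : ℕ) := by omega
    refine ⟨(t₀ : M) * ((pn (α + k * β) * h) * z), hEl k hkle, ?_⟩
    have c1 : 1 ≤ α + k * β := hα.trans_le (Nat.le_add_right _ _)
    have c2 : 1 ≤ α + (ℓ : ℕ) * β := hα.trans_le (Nat.le_add_right _ _)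
    push_cast [pn_coe c1, pn_coe c2, pn_coe hβ]
    rw [show ((k : ℕ) : ℤ) = i + ((ℓ : ℕ) : ℤ) from hkz]
    ring

end GeoArith

/-- There exists an ultrafilter `p` on the positive integers such that: (i) every `A ∈ p`
contains `b, g` with `b*g^j ∈ A` for all `0 ≤ j ≤ ℓ`; (ii) for every `A ∈ p` and
`h, ℓ ∈ ℕ` there are positive integers `a, d` with `h*d ∈ A` and `h*a + i*d ∈ A` for every
integer `-ℓ ≤ i ≤ ℓ`; and (iii) `s·ℕ ∈ p` for every positive integer `s`. -/
theorem stmt_15 : ∃ p : Ultrafilter ℕ+,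
    (∀ A ∈ p, ∀ ℓ : ℕ+, ∃ b ∈ A, ∃ g ∈ A, ∀ j : ℕ, j ≤ (ℓ : ℕ) → b * g ^ j ∈ A) ∧
    (∀ A ∈ p, ∀ h ℓ : ℕ+, ∃ a d : ℕ+, h * d ∈ A ∧
      ∀ i : ℤ, -((ℓ : ℕ) : ℤ) ≤ i → i ≤ ((ℓ : ℕ) : ℤ) →
        ∃ m ∈ A, ((m : ℕ) : ℤ) = ((h : ℕ) : ℤ) * ((a : ℕ) : ℤ) + i * ((d : ℕ) : ℤ)) ∧
    (∀ s : ℕ+, {k : ℕ+ | (s : ℕ) ∣ (k : ℕ)} ∈ p) := by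
  obtain ⟨p, hPhi, hidem⟩ := GeoArith.exists_good_idem
  refine ⟨p, ?_, ?_, fun s => hPhi.2 s⟩
  · intro A hA ℓ
    exact GeoArith.config_geo hidem hPhi.1 hA (ℓ : ℕ)
  · intro A hA h ℓ
    exact GeoArith.config_ap hPhi.1 hA h ℓ
end

section
/- Let p be an ultrafilter on ℕ (the positive integers) satisfying: (i) for every A ∈ p and every ℓ ∈ ℕ there exist b, g ∈ A with b·g^j ∈ A for all 0 ≤ j ≤ ℓ; (ii) for every A ∈ p and all h, ℓ ∈ ℕ there exist a, d ∈ ℕ with h·d ∈ A and h·a + i·d ∈ A for every integer i with −ℓ ≤ i ≤ ℓ; (iii) s·ℕ ∈ p for every s ∈ ℕ. Then for every A ∈ p, every positive natural number n, all nonzero integers a, b, and every c ∈ {a, b, a+b}, there exist w, x, y, z ∈ A such that a·x + b·y = c·w·z^n. -/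
/-- Let `p` be an ultrafilter on the positive integers satisfying properties (i)–(iii) of
Theorem `SpecialUltrafilter`. Then every `A ∈ p` contains a solution `w, x, y, z` of
`a*x + b*y = c*w*z^n` for all nonzero integers `a, b`, every `c ∈ {a, b, a+b}`, and every
`n ≥ 1`. -/
theorem stmt_16 (p : Ultrafilter ℕ+)
    (h1 : ∀ A ∈ p, ∀ ℓ : ℕ+, ∃ b ∈ A, ∃ g ∈ A, ∀ j : ℕ, j ≤ (ℓ : ℕ) → b * g ^ j ∈ A)
    (h2 : ∀ A ∈ p, ∀ h ℓ : ℕ+, ∃ a d : ℕ+, h * d ∈ A ∧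
      ∀ i : ℤ, -((ℓ : ℕ) : ℤ) ≤ i → i ≤ ((ℓ : ℕ) : ℤ) →
        ∃ m ∈ A, ((m : ℕ) : ℤ) = ((h : ℕ) : ℤ) * ((a : ℕ) : ℤ) + i * ((d : ℕ) : ℤ))
    (h3 : ∀ s : ℕ+, {k : ℕ+ | (s : ℕ) ∣ (k : ℕ)} ∈ p) :
    ∀ A ∈ p, ∀ n : ℕ, 0 < n → ∀ a b c : ℤ, a ≠ 0 → b ≠ 0 →
      (c = a ∨ c = b ∨ c = a + b) →
      ∃ w ∈ A, ∃ x ∈ A, ∃ y ∈ A, ∃ z ∈ A,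
        a * ((x : ℕ) : ℤ) + b * ((y : ℕ) : ℤ) =
          c * ((w : ℕ) : ℤ) * ((z : ℕ) : ℤ) ^ n := by
  intro A hA n hn a b c ha hb hc
  set F : Set ℕ+ := {m : ℕ+ | ∃ w ∈ A, ∃ z ∈ A, w * z ^ n = m} with hFdef
  have hFp : F ∈ p := by
    by_contra hFc
    have hFc' : Fᶜ ∈ p := Ultrafilter.compl_mem_iff_notMem.mpr hFc
    have hAF : A ∩ Fᶜ ∈ p := Filter.inter_mem hA hFc'
    obtain ⟨β, hβ, g, hg, hpow⟩ := h1 (A ∩ Fᶜ) hAF ⟨n, hn⟩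
    have hmem : β * g ^ n ∈ A ∩ Fᶜ := hpow n (le_refl _)
    exact hmem.2 ⟨β, hβ.1, g, hg.1, rfl⟩
  have hBp : A ∩ F ∈ p := Filter.inter_mem hA hFp
  have key : ∀ u v : ℤ, u ≠ 0 → v ≠ 0 →
      ∃ w ∈ A, ∃ x ∈ A, ∃ y ∈ A, ∃ z ∈ A,
        u * ((x : ℕ) : ℤ) + v * ((y : ℕ) : ℤ) =
          u * ((w : ℕ) : ℤ) * ((z : ℕ) : ℤ) ^ n := by
    intro u v hu hv
    have hupos : 0 < u.natAbs := Int.natAbs_pos.mpr hu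
    have hvpos : 0 < v.natAbs := Int.natAbs_pos.mpr hv
    let U : ℕ+ := ⟨u.natAbs, hupos⟩
    let V : ℕ+ := ⟨v.natAbs, hvpos⟩
    obtain ⟨a0, d, hyB, hAP⟩ := h2 (A ∩ F) hBp U V
    have hUc : ((U : ℕ) : ℤ) = (u.natAbs : ℤ) := rfl
    have hVc : ((V : ℕ) : ℤ) = (v.natAbs : ℤ) := rfl
    obtain ⟨i, hi1, hi2, hui⟩ :
        ∃ i : ℤ, -((V : ℕ) : ℤ) ≤ i ∧ i ≤ ((V : ℕ) : ℤ) ∧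
          u * i + v * ((U : ℕ) : ℤ) = 0 := by
      rw [hVc]
      rcases hu.lt_or_gt with h | h
      · refine ⟨v, by omega, by omega, ?_⟩
        rw [hUc]
        have hval : ((u.natAbs : ℤ)) = -u := by omega
        rw [hval]; ring
      · refine ⟨-v, by omega, by omega, ?_⟩
        rw [hUc]
        have hval : ((u.natAbs : ℤ)) = u := by omega
        rw [hval]; ring
    obtain ⟨x, hx, hxval⟩ := hAP i hi1 hi2
    obtain ⟨m0, hm0, hm0val⟩ := hAP 0
      (by rw [hVc]; exact neg_nonpos.mpr (Int.natCast_nonneg _))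
      (by rw [hVc]; exact Int.natCast_nonneg _)
    obtain ⟨w, hw, z, hz, hwz⟩ := hm0.2
    refine ⟨w, hw, x, hx.1, U * d, hyB.1, z, hz, ?_⟩
    have hYcast : (((U * d : ℕ+) : ℕ) : ℤ) = ((U : ℕ) : ℤ) * ((d : ℕ) : ℤ) := by
      push_cast [PNat.mul_coe]
      ring
    have hm0cast : ((m0 : ℕ) : ℤ) = ((w : ℕ) : ℤ) * ((z : ℕ) : ℤ) ^ n := by
      rw [← hwz]
      push_cast
      ring
    rw [hxval, hYcast]
    have hstep : u * (((U : ℕ) : ℤ) * ((a0 : ℕ) : ℤ) + i * ((d : ℕ) : ℤ))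
        + v * (((U : ℕ) : ℤ) * ((d : ℕ) : ℤ))
        = u * (((U : ℕ) : ℤ) * ((a0 : ℕ) : ℤ)) := by
      linear_combination ((d : ℕ) : ℤ) * hui
    rw [hstep]
    have : ((m0 : ℕ) : ℤ) = ((U : ℕ) : ℤ) * ((a0 : ℕ) : ℤ) := by
      rw [hm0val]; ring
    rw [← this, hm0cast]
    ring
  rcases hc with hc | hc | hc
  · obtain ⟨w, hw, x, hx, y, hy, z, hz, heq⟩ := key a b ha hb
    exact ⟨w, hw, x, hx, y, hy, z, hz, by rw [hc]; linear_combination heq⟩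
  · obtain ⟨w, hw, x, hx, y, hy, z, hz, heq⟩ := key b a hb ha
    exact ⟨w, hw, y, hy, x, hx, z, hz, by rw [hc]; linear_combination heq⟩
  · obtain ⟨P, hPA, hPF⟩ := (Ultrafilter.nonempty_of_mem hBp)
    obtain ⟨w, hw, z, hz, hwz⟩ := hPF
    refine ⟨w, hw, P, hPA, P, hPA, z, hz, ?_⟩
    have hPc : ((P : ℕ) : ℤ) = ((w : ℕ) : ℤ) * ((z : ℕ) : ℤ) ^ n := by
      rw [← hwz]; push_cast; ring
    rw [hc]
    linear_combination (a + b) * hPc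
end

section
/- Let G be a group and H a subgroup of G of finite index. Let p be an ultrafilter on G that is idempotent with respect to the extension of the group operation to ultrafilters, i.e., p·p = p, where for ultrafilters p, q on G the product is defined by: A ∈ p·q if and only if {s ∈ G : s^{-1}·A ∈ q} ∈ p (here s^{-1}·A = {x ∈ G : s·x ∈ A}). Then H ∈ p, i.e., the underlying set of H belongs to p. -/
/-!
Finitely many left cosets of `H` partition `G`, so one of them, `A`, lies in `p`. Idempotency
turns `A ∈ p` into `{s | s⁻¹A ∈ p} ∈ p`, and intersecting with `A` yields some `s ∈ A` with
`s⁻¹A ∈ p`. But `s⁻¹A = H` for every `s` in the coset `A`.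
-/

theorem Ultrafilter.exists_fiber_mem_of_finite {α β : Type*} [Finite β] (p : Ultrafilter α)
    (f : α → β) : ∃ b, f ⁻¹' {b} ∈ p := by
  obtain ⟨b, hb⟩ := (p.map f).eq_pure_of_finite
  exact ⟨b, Ultrafilter.mem_map.mp (hb ▸ Ultrafilter.mem_pure.mpr rfl)⟩

theorem Ultrafilter.exists_mem_preimage_mul_left_mem {M : Type*} [Mul M] (p : Ultrafilter M)
    (hp : ∀ A : Set M, A ∈ p ↔ {s : M | {x : M | s * x ∈ A} ∈ p} ∈ p) {A : Set M}
    (hA : A ∈ p) : ∃ s ∈ A, {x : M | s * x ∈ A} ∈ p := by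
  obtain ⟨s, hs, hsA⟩ := Ultrafilter.nonempty_of_mem (Filter.inter_mem ((hp A).mp hA) hA)
  exact ⟨s, hsA, hs⟩

theorem QuotientGroup.mk_mul_left_eq_mk_iff {G : Type*} [Group G] (H : Subgroup G) (s x : G) :
    ((s * x : G) : G ⧸ H) = s ↔ x ∈ H := by
  rw [QuotientGroup.eq]
  simp

/-- Let `G` be a group, `H` a finite-index subgroup, and `p` an ultrafilter on `G` that is
idempotent for the product `A ∈ p·q ↔ {s | s⁻¹·A ∈ q} ∈ p` (the idempotency `p·p = p` is
stated elementwise). Then the underlying set of `H` belongs to `p`. -/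
theorem stmt_19 {G : Type*} [Group G] (H : Subgroup G) (hH : H.FiniteIndex)
    (p : Ultrafilter G)
    (hp : ∀ A : Set G, A ∈ p ↔ {s : G | {x : G | s * x ∈ A} ∈ p} ∈ p) :
    (H : Set G) ∈ p := by
  have : Finite (G ⧸ H) := Subgroup.finite_quotient_of_finiteIndex
  obtain ⟨c, hc⟩ := p.exists_fiber_mem_of_finite ((↑) : G → G ⧸ H)
  obtain ⟨s, rfl, hs⟩ := p.exists_mem_preimage_mul_left_mem hp hc
  have hcoset : {x : G | s * x ∈ ((↑) : G → G ⧸ H) ⁻¹' {(s : G ⧸ H)}} = H := by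
    ext x
    exact QuotientGroup.mk_mul_left_eq_mk_iff H s x
  rwa [hcoset] at hs
end
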